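/- arXiv:2207.04374 — 5 statements merged into one kernel-verified Lean document; each statement's English description precedes it below -/
import Mathlib

section
/- Let F ∈ ℂ[z_1,…,z_m] be the generating function of a q-ary array f of size 2^(m), and suppose F = A·B where A involves only the variables z_k with k in a subset S ⊆ {1,…,m}, B involves only the variables z_k with k in the complement S^c, and the constant coefficients of A and of B both lie in {ζ^c : c ∈ Z_q}. Then there exist q-ary arrays a : {0,1}^S → Z_q and b : {0,1}^{S^c} → Z_q such that A = Σ_{u∈{0,1}^S} ζ^{a(u)} Π_{k∈S} z_k^{u_k}, B = Σ_{v∈{0,1}^{S^c}} ζ^{b(v)} Π_{k∈S^c} z_k^{v_k}, and f(x) = a(x|_S) + b(x|_{S^c}) for every x ∈ {0,1}^m. -/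
open scoped BigOperators

/-- ζ = exp(2πi/q). -/
noncomputable def zeta (q : ℕ) : ℂ := Complex.exp (2 * Real.pi * Complex.I / q)

/-- ζ^c for c ∈ Z_q (well defined since ζ^q = 1). -/
noncomputable def zetaPow (q : ℕ) (c : ZMod q) : ℂ := zeta q ^ c.val

/-- Aperiodic cross-correlation of arrays u, v at shift τ:
    C_{u,v}(τ) = Σ_{x, x+τ ∈ {0,1}^m} ζ^{u(x+τ) - v(x)}. -/
noncomputable def corr (q m : ℕ) (u v : (Fin m → Fin 2) → ZMod q) (τ : Fin m → ℤ) : ℂ :=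
  ∑ y : Fin m → Fin 2, ∑ x : Fin m → Fin 2,
    if ∀ i, ((y i : ℕ) : ℤ) - ((x i : ℕ) : ℤ) = τ i then zetaPow q (u y - v x) else 0

/-- (f, g) is a Golay array pair of size 2^(m). -/
def IsGAP (q m : ℕ) (f g : (Fin m → Fin 2) → ZMod q) : Prop :=
  ∀ τ : Fin m → ℤ, (∀ i, τ i = -1 ∨ τ i = 0 ∨ τ i = 1) → τ ≠ 0 →
    corr q m f f τ + corr q m g g τ = 0

/-- Generating function of an array, as a function on ℂ^m. -/
noncomputable def genFun (q m : ℕ) (f : (Fin m → Fin 2) → ZMod q) (z : Fin m → ℂ) : ℂ :=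
  ∑ x : Fin m → Fin 2, zetaPow q (f x) * ∏ i, (z i) ^ ((x i : ℕ))

/-- Coefficient-wise conjugate of the generating function, as a function on ℂ^m. -/
noncomputable def genFunConj (q m : ℕ) (f : (Fin m → Fin 2) → ZMod q) (z : Fin m → ℂ) : ℂ :=
  ∑ x : Fin m → Fin 2, (starRingEnd ℂ) (zetaPow q (f x)) * ∏ i, (z i) ^ ((x i : ℕ))

/-- Generating function of an array, as a multivariate polynomial. -/
noncomputable def genPoly (q m : ℕ) (f : (Fin m → Fin 2) → ZMod q) :
    MvPolynomial (Fin m) ℂ :=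
  ∑ x : Fin m → Fin 2, MvPolynomial.C (zetaPow q (f x)) * ∏ i, (MvPolynomial.X i) ^ ((x i : ℕ))

/-- Generating function of an array on a subset S of the coordinates. -/
noncomputable def genPolyOn (q m : ℕ) (S : Finset (Fin m)) (a : (↥S → Fin 2) → ZMod q) :
    MvPolynomial (Fin m) ℂ :=
  ∑ u : ↥S → Fin 2, MvPolynomial.C (zetaPow q (a u)) * ∏ k : ↥S, (MvPolynomial.X (k : Fin m)) ^ ((u k : ℕ))

/-- (f, g) is a standard Golay array pair of size 2^(m). -/
def IsStandard (q m : ℕ) (hm : 0 < m) (f g : (Fin m → Fin 2) → ZMod q) : Prop :=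
  ∃ π : Equiv.Perm (Fin m), ∃ c0 c' : ZMod q, ∃ c : Fin m → ZMod q,
    (∀ x : Fin m → Fin 2,
        f x = ((q / 2 : ℕ) : ZMod q) *
            (∑ k : Fin m, if h : (k : ℕ) + 1 < m then
                ((x (π k) : ℕ) : ZMod q) * ((x (π ⟨(k : ℕ) + 1, h⟩) : ℕ) : ZMod q) else 0)
          + (∑ k : Fin m, c k * ((x k : ℕ) : ZMod q)) + c0)
    ∧ (∀ x : Fin m → Fin 2,
        g x = f x + ((q / 2 : ℕ) : ZMod q) * ((x (π ⟨0, hm⟩) : ℕ) : ZMod q) + c')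

namespace GPFS

variable {q m : ℕ}

lemma zeta_pow_q (hq : 0 < q) : zeta q ^ q = 1 := by
  have hq' : (q:ℂ) ≠ 0 := Nat.cast_ne_zero.mpr hq.ne'
  rw [zeta, ← Complex.exp_nat_mul,
    show (q:ℂ) * (2 * Real.pi * Complex.I / q) = 2 * Real.pi * Complex.I by field_simp]
  exact Complex.exp_two_pi_mul_I

lemma zeta_pow_mod (hq : 0 < q) (n : ℕ) : zeta q ^ n = zeta q ^ (n % q) := by
  conv_lhs => rw [← Nat.mod_add_div n q]
  rw [pow_add, pow_mul, zeta_pow_q hq, one_pow, mul_one]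

lemma zetaPow_add (hq : 0 < q) (c d : ZMod q) :
    zetaPow q (c + d) = zetaPow q c * zetaPow q d := by
  haveI : NeZero q := ⟨hq.ne'⟩
  rw [zetaPow, zetaPow, zetaPow, ← pow_add, ZMod.val_add, ← zeta_pow_mod hq]

lemma zetaPow_ne_zero (c : ZMod q) : zetaPow q c ≠ 0 :=
  pow_ne_zero _ (Complex.exp_ne_zero _)

lemma zetaPow_inj (hq : 0 < q) {c d : ZMod q} (h : zetaPow q c = zetaPow q d) : c = d := by
  haveI : NeZero q := ⟨hq.ne'⟩
  have h2 := (Complex.isPrimitiveRoot_exp q hq.ne').pow_inj (ZMod.val_lt c) (ZMod.val_lt d) h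
  exact ZMod.val_injective q h2

/-- exponent vector of a 0/1 array -/
noncomputable def enc (x : Fin m → Fin 2) : Fin m →₀ ℕ :=
  Finsupp.equivFunOnFinite.symm fun i => (x i : ℕ)

@[simp] lemma enc_apply (x : Fin m → Fin 2) (i : Fin m) : enc x i = (x i : ℕ) := rfl

lemma enc_inj {x y : Fin m → Fin 2} (h : enc x = enc y) : x = y := by
  funext i
  have := DFunLike.congr_fun h i
  simpa [Fin.val_eq_val] using this

lemma prod_X_pow (x : Fin m → Fin 2) :
    (∏ i, (MvPolynomial.X i : MvPolynomial (Fin m) ℂ) ^ ((x i : ℕ)))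
      = MvPolynomial.monomial (enc x) 1 := by
  exact ((Finset.prod_subset (Finset.subset_univ (enc x).support)
      (fun i _ hi => by rw [show (x i : ℕ) = 0 from Finsupp.notMem_support_iff.mp hi, pow_zero])).symm).trans
    (MvPolynomial.prod_X_pow_eq_monomial)

lemma genPoly_eq (f : (Fin m → Fin 2) → ZMod q) :
    genPoly q m f = ∑ x : Fin m → Fin 2, MvPolynomial.monomial (enc x) (zetaPow q (f x)) := by
  unfold genPoly
  refine Finset.sum_congr rfl fun x _ => ?_
  rw [prod_X_pow, MvPolynomial.C_mul_monomial, mul_one]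

lemma coeff_genPoly_enc (f : (Fin m → Fin 2) → ZMod q) (x : Fin m → Fin 2) :
    (genPoly q m f).coeff (enc x) = zetaPow q (f x) := by
  rw [genPoly_eq, MvPolynomial.coeff_sum]
  rw [Finset.sum_eq_single x (fun y _ hy => by
      rw [MvPolynomial.coeff_monomial, if_neg (fun h => hy (enc_inj h))])
    (fun h => absurd (Finset.mem_univ x) h)]
  rw [MvPolynomial.coeff_monomial, if_pos rfl]

lemma coeff_genPoly_of_ne (f : (Fin m → Fin 2) → ZMod q) {d : Fin m →₀ ℕ}
    (hd : ∀ x : Fin m → Fin 2, enc x ≠ d) :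
    (genPoly q m f).coeff d = 0 := by
  rw [genPoly_eq, MvPolynomial.coeff_sum]
  exact Finset.sum_eq_zero fun x _ => by
    rw [MvPolynomial.coeff_monomial, if_neg (hd x)]

lemma coeff_eq_zero_of_degreeOf {A : MvPolynomial (Fin m) ℂ} {k : Fin m}
    (hk : MvPolynomial.degreeOf k A = 0) {d : Fin m →₀ ℕ} (hdk : d k ≠ 0) :
    A.coeff d = 0 := by
  by_contra h
  have hd : d ∈ A.support := MvPolynomial.mem_support_iff.mpr h
  have := MvPolynomial.degreeOf_le_iff.mp hk.le d hd
  omega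

open Classical in
lemma coeff_mul_split (S : Finset (Fin m)) (A B : MvPolynomial (Fin m) ℂ)
    (hA : ∀ d : Fin m →₀ ℕ, (∃ k, k ∉ S ∧ d k ≠ 0) → A.coeff d = 0)
    (hB : ∀ d : Fin m →₀ ℕ, (∃ k, k ∈ S ∧ d k ≠ 0) → B.coeff d = 0)
    (d : Fin m →₀ ℕ) :
    (A * B).coeff d = A.coeff (d.filter (· ∈ S)) * B.coeff (d.filter (· ∉ S)) := by
  rw [MvPolynomial.coeff_mul]
  refine Finset.sum_eq_single (d.filter (· ∈ S), d.filter (· ∉ S)) ?_ ?_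
  · rintro ⟨d1, d2⟩ hmem hne
    rw [Finset.HasAntidiagonal.mem_antidiagonal] at hmem
    by_cases h1 : ∃ k, k ∉ S ∧ d1 k ≠ 0
    · rw [hA _ h1, zero_mul]
    by_cases h2 : ∃ k, k ∈ S ∧ d2 k ≠ 0
    · rw [hB _ h2, mul_zero]
    exfalso
    apply hne
    push_neg at h1 h2
    have hsum : ∀ k, d1 k + d2 k = d k := fun k => by
      rw [← hmem]; rfl
    have hd1 : d1 = d.filter (· ∈ S) := by
      ext k
      by_cases hk : k ∈ S
      · rw [Finsupp.filter_apply_pos _ _ hk, ← hsum k, h2 k hk, add_zero]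
      · rw [Finsupp.filter_apply_neg _ _ hk, h1 k hk]
    have hd2 : d2 = d.filter (· ∉ S) := by
      ext k
      by_cases hk : k ∈ S
      · rw [Finsupp.filter_apply_neg (fun x => x ∉ S) d (by simpa using hk), h2 k hk]
      · rw [Finsupp.filter_apply_pos (fun x => x ∉ S) d hk, ← hsum k, h1 k hk, zero_add]
    rw [hd1, hd2]
  · intro h
    exact absurd (Finset.HasAntidiagonal.mem_antidiagonal.mpr (Finsupp.filter_pos_add_filter_neg d (· ∈ S))) h


/-- extend a function on a subset by zero -/
def extend (T : Finset (Fin m)) (u : ↥T → Fin 2) : Fin m → Fin 2 :=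
  fun k => if h : k ∈ T then u ⟨k, h⟩ else 0

lemma extend_mem (T : Finset (Fin m)) (u : ↥T → Fin 2) {k : Fin m} (h : k ∈ T) :
    extend T u k = u ⟨k, h⟩ := dif_pos h

lemma extend_not_mem (T : Finset (Fin m)) (u : ↥T → Fin 2) {k : Fin m} (h : k ∉ T) :
    extend T u k = 0 := dif_neg h

lemma encExtend_inj (T : Finset (Fin m)) {u v : ↥T → Fin 2}
    (h : enc (extend T u) = enc (extend T v)) : u = v := by
  have h2 := enc_inj h
  funext k
  have := congrFun h2 (k : Fin m)
  rw [extend_mem T u k.2, extend_mem T v k.2] at this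
  exact this

open Classical in
lemma filter_enc (T : Finset (Fin m)) (x : Fin m → Fin 2) :
    (enc x).filter (· ∈ T) = enc (extend T (fun k => x (k : Fin m))) := by
  ext k
  by_cases hk : k ∈ T
  · rw [Finsupp.filter_apply_pos _ _ hk, enc_apply, enc_apply, extend_mem T _ hk]
  · rw [Finsupp.filter_apply_neg _ _ hk, enc_apply, extend_not_mem T _ hk]; rfl

lemma enc_extend_eq_self (T : Finset (Fin m)) (u : ↥T → Fin 2) :
    enc (extend T (fun k => extend T u (k : Fin m))) = enc (extend T u) := by
  congr 1
  funext k
  by_cases hk : k ∈ T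
  · rw [extend_mem T _ hk]
  · rw [extend_not_mem T _ hk, extend_not_mem T _ hk]

lemma filter_enc_extend_compl (T : Finset (Fin m)) (u : ↥T → Fin 2) :
    (enc (extend T u)).filter (· ∉ T) = 0 := by
  ext k
  by_cases hk : k ∈ T
  · rw [Finsupp.filter_apply_neg (fun x => x ∉ T) _ (by simpa using hk)]; rfl
  · rw [Finsupp.filter_apply_pos (fun x => x ∉ T) _ hk, enc_apply, extend_not_mem T _ hk]; rfl

lemma genPolyOn_eq (T : Finset (Fin m)) (a : (↥T → Fin 2) → ZMod q) :
    genPolyOn q m T a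
      = ∑ u : ↥T → Fin 2, MvPolynomial.monomial (enc (extend T u)) (zetaPow q (a u)) := by
  unfold genPolyOn
  refine Finset.sum_congr rfl fun u _ => ?_
  have hprod : (∏ k : ↥T, (MvPolynomial.X (k : Fin m) : MvPolynomial (Fin m) ℂ) ^ ((u k : ℕ)))
      = ∏ i, (MvPolynomial.X i : MvPolynomial (Fin m) ℂ) ^ ((extend T u i : ℕ)) := by
    have h1 := Finset.prod_mul_prod_compl T
      (fun i => (MvPolynomial.X i : MvPolynomial (Fin m) ℂ) ^ ((extend T u i : ℕ)))
    have h2 : (∏ i ∈ Tᶜ,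
        (MvPolynomial.X i : MvPolynomial (Fin m) ℂ) ^ ((extend T u i : ℕ))) = 1 :=
      Finset.prod_eq_one fun i hi => by
        rw [extend_not_mem T u (Finset.mem_compl.mp hi)]; rfl
    have h3 : (∏ i ∈ T,
        (MvPolynomial.X i : MvPolynomial (Fin m) ℂ) ^ ((extend T u i : ℕ)))
        = ∏ k : ↥T, (MvPolynomial.X (k : Fin m) : MvPolynomial (Fin m) ℂ) ^ ((u k : ℕ)) := by
      rw [← Finset.prod_coe_sort T]
      exact Finset.prod_congr rfl fun k _ => by rw [extend_mem T u k.2]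
    rw [← h1, h2, mul_one, h3]
  rw [hprod, prod_X_pow, MvPolynomial.C_mul_monomial, mul_one]

lemma coeff_genPolyOn_enc (T : Finset (Fin m)) (a : (↥T → Fin 2) → ZMod q) (u : ↥T → Fin 2) :
    (genPolyOn q m T a).coeff (enc (extend T u)) = zetaPow q (a u) := by
  rw [genPolyOn_eq, MvPolynomial.coeff_sum]
  rw [Finset.sum_eq_single u (fun v _ hv => by
      rw [MvPolynomial.coeff_monomial, if_neg (fun h => hv (encExtend_inj T h))])
    (fun h => absurd (Finset.mem_univ u) h)]
  rw [MvPolynomial.coeff_monomial, if_pos rfl]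

lemma coeff_genPolyOn_of_ne (T : Finset (Fin m)) (a : (↥T → Fin 2) → ZMod q) {d : Fin m →₀ ℕ}
    (hd : ∀ u : ↥T → Fin 2, enc (extend T u) ≠ d) :
    (genPolyOn q m T a).coeff d = 0 := by
  rw [genPolyOn_eq, MvPolynomial.coeff_sum]
  exact Finset.sum_eq_zero fun u _ => by
    rw [MvPolynomial.coeff_monomial, if_neg (hd u)]

open Classical in
/-- main helper: identify one factor -/
lemma factor_side (hq : 0 < q) (f : (Fin m → Fin 2) → ZMod q)
    (T : Finset (Fin m)) (A B : MvPolynomial (Fin m) ℂ)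
    (hmul : ∀ d : Fin m →₀ ℕ,
      (genPoly q m f).coeff d = A.coeff (d.filter (· ∈ T)) * B.coeff (d.filter (· ∉ T)))
    (hA : ∀ d : Fin m →₀ ℕ, (∃ k, k ∉ T ∧ d k ≠ 0) → A.coeff d = 0)
    (cB : ZMod q) (hcB : B.coeff 0 = zetaPow q cB) :
    A = genPolyOn q m T (fun u => f (extend T u) - cB) := by
  have key : ∀ u : ↥T → Fin 2,
      A.coeff (enc (extend T u)) = zetaPow q (f (extend T u) - cB) := by
    intro u
    have h1 := hmul (enc (extend T u))
    rw [filter_enc, enc_extend_eq_self, filter_enc_extend_compl, hcB,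
      coeff_genPoly_enc] at h1
    have h2 : zetaPow q (f (extend T u) - cB) * zetaPow q cB
        = A.coeff (enc (extend T u)) * zetaPow q cB := by
      rw [← zetaPow_add hq, sub_add_cancel, h1]
    exact (mul_right_cancel₀ (zetaPow_ne_zero cB) h2).symm
  apply MvPolynomial.ext
  intro d
  by_cases hrange : ∃ u : ↥T → Fin 2, enc (extend T u) = d
  · obtain ⟨u, rfl⟩ := hrange
    rw [key u, coeff_genPolyOn_enc]
  · rw [coeff_genPolyOn_of_ne T _ (not_exists.mp hrange)]
    by_cases hsupp : ∃ k, k ∉ T ∧ d k ≠ 0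
    · exact hA d hsupp
    push_neg at hsupp
    have hfiltT : d.filter (· ∈ T) = d := by
      ext k
      by_cases hk : k ∈ T
      · rw [Finsupp.filter_apply_pos _ _ hk]
      · rw [Finsupp.filter_apply_neg _ _ hk, hsupp k hk]
    have hfiltC : d.filter (· ∉ T) = 0 := by
      ext k
      by_cases hk : k ∈ T
      · rw [Finsupp.filter_apply_neg (fun x => x ∉ T) _ (by simpa using hk)]; rfl
      · rw [Finsupp.filter_apply_pos (fun x => x ∉ T) _ hk, hsupp k hk]; rfl
    have hne : ∀ x : Fin m → Fin 2, enc x ≠ d := by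
      intro x hx
      apply hrange
      refine ⟨fun k => x (k : Fin m), ?_⟩
      rw [← hx]
      ext k
      by_cases hk : k ∈ T
      · rw [enc_apply, enc_apply, extend_mem T _ hk]
      · rw [enc_apply, enc_apply, extend_not_mem T _ hk, Fin.val_zero]
        have h5 : (x k : ℕ) = d k := by rw [← hx]; rfl
        have h6 := hsupp k hk
        omega
    have h0 := hmul d
    rw [coeff_genPoly_of_ne f hne, hfiltT, hfiltC, hcB] at h0
    rcases mul_eq_zero.mp h0.symm with h | h
    · exact h
    · exact absurd h (zetaPow_ne_zero cB)

end GPFS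

/-- if F = A·B where A involves only the variables in S, B only those in Sᶜ,
    and both constant coefficients lie in {ζ^c}, then A and B are generating functions of
    q-ary arrays a, b and f(x) = a(x|_S) + b(x|_{Sᶜ}). -/


theorem genPoly_factor_split (q m : ℕ) (hq : 0 < q)
    (f : (Fin m → Fin 2) → ZMod q) (S : Finset (Fin m))
    (A B : MvPolynomial (Fin m) ℂ)
    (hF : genPoly q m f = A * B)
    (hAvars : ∀ k : Fin m, k ∉ S → MvPolynomial.degreeOf k A = 0)
    (hBvars : ∀ k : Fin m, k ∈ S → MvPolynomial.degreeOf k B = 0)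
    (hAc : ∃ cA : ZMod q, MvPolynomial.coeff (0 : Fin m →₀ ℕ) A = zetaPow q cA)
    (hBc : ∃ cB : ZMod q, MvPolynomial.coeff (0 : Fin m →₀ ℕ) B = zetaPow q cB) :
    ∃ a : (↥S → Fin 2) → ZMod q, ∃ b : (↥(Sᶜ) → Fin 2) → ZMod q,
      A = genPolyOn q m S a ∧ B = genPolyOn q m Sᶜ b ∧
      ∀ x : Fin m → Fin 2,
        f x = a (fun k => x (k : Fin m)) + b (fun k => x (k : Fin m)) := by
  obtain ⟨cA, hcA⟩ := hAc
  obtain ⟨cB, hcB⟩ := hBc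
  have hA0 : ∀ d : Fin m →₀ ℕ, (∃ k, k ∉ S ∧ d k ≠ 0) → A.coeff d = 0 := by
    rintro d ⟨k, hk, hdk⟩
    exact GPFS.coeff_eq_zero_of_degreeOf (hAvars k hk) hdk
  have hB0 : ∀ d : Fin m →₀ ℕ, (∃ k, k ∈ S ∧ d k ≠ 0) → B.coeff d = 0 := by
    rintro d ⟨k, hk, hdk⟩
    exact GPFS.coeff_eq_zero_of_degreeOf (hBvars k hk) hdk
  have hmul : ∀ d : Fin m →₀ ℕ, (genPoly q m f).coeff d
      = A.coeff (d.filter (· ∈ S)) * B.coeff (d.filter (· ∉ S)) := fun d => by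
    rw [hF]; exact GPFS.coeff_mul_split S A B hA0 hB0 d
  have hB0' : ∀ d : Fin m →₀ ℕ, (∃ k, k ∉ Sᶜ ∧ d k ≠ 0) → B.coeff d = 0 := by
    rintro d ⟨k, hk, hdk⟩
    exact hB0 d ⟨k, by simpa using hk, hdk⟩
  have efilt : ∀ d : Fin m →₀ ℕ, d.filter (· ∈ Sᶜ) = d.filter (· ∉ S) := by
    intro d; ext k
    by_cases hk : k ∈ S <;> simp [Finsupp.filter_apply, hk]
  have hmulB : ∀ d : Fin m →₀ ℕ, (genPoly q m f).coeff d
      = B.coeff (d.filter (· ∈ Sᶜ)) * A.coeff (d.filter (· ∉ Sᶜ)) := by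
    intro d
    have e2 : d.filter (· ∉ Sᶜ) = d.filter (· ∈ S) := by
      ext k; by_cases hk : k ∈ S <;> simp [Finsupp.filter_apply, hk]
    rw [efilt d, e2, mul_comm]; exact hmul d
  have hAeq := GPFS.factor_side hq f S A B hmul hA0 cB hcB
  have hBeq := GPFS.factor_side hq f Sᶜ B A hmulB hB0' cA hcA
  refine ⟨_, _, hAeq, hBeq, ?_⟩
  intro x
  have h1 := hmul (GPFS.enc x)
  rw [GPFS.coeff_genPoly_enc, ← efilt (GPFS.enc x), GPFS.filter_enc, GPFS.filter_enc,
    hAeq, hBeq, GPFS.coeff_genPolyOn_enc, GPFS.coeff_genPolyOn_enc,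
    ← GPFS.zetaPow_add hq] at h1
  have h2 := GPFS.zetaPow_inj hq h1
  rw [h2]
end

section
/- Let q be an even positive integer, m = m_1 + m_2, and let f, g : {0,1}^m × {0,1} → Z_q form a q-ary Golay array pair of size 2^(m+1). Write points of {0,1}^m as (x_1, x_2) with x_1 ∈ {0,1}^{m_1}, x_2 ∈ {0,1}^{m_2}. Suppose there exist q-ary arrays a, b : {0,1}^{m_1} → Z_q and c, d : {0,1}^{m_2} → Z_q such that for all (x_1, x_2): f(x_1,x_2,0) = a(x_1) + c(x_2), g(x_1,x_2,0) = b(x_1) + c(x_2), f(x_1,x_2,1) = −b*(x_1) + d(x_2), and g(x_1,x_2,1) = −a*(x_1) + q/2 + d(x_2), where a*(x_1) = a(1−x_1) and b*(x_1) = b(1−x_1) denote the reverse arrays. Then (a, b) is a Golay array pair of size 2^(m_1) and (c, d) is a Golay array pair of size 2^(m_2). -/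
open scoped BigOperators

/-!
Take a shift that is `τ` on the `x₁`-block and `0` elsewhere. It only pairs points with the
same `x₂` and the same last coordinate `u`, so `C_f` is the sum over `x₂` and `u` of the
correlations of the arrays `x₁ ↦ f(x₁, x₂, u)`, which are `a + const` and `-b* + const`.
Adding a constant changes no correlation and negating a reversed array returns the
correlation of the original one, so `C_f = C_g = 2^{m₂} (C_a + C_b)`, and the Golay property
of `(f, g)` forces `C_a + C_b = 0`. Shifts on the `x₂`-block give `(c, d)` the same way.
-/

theorem Fintype.sum_sum_ite_of_equiv_prod {α β γ M : Type*} [Fintype α] [Fintype β]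
    [Fintype γ] [DecidableEq β] [AddCommMonoid M] (e : α × β ≃ γ) (R : γ → γ → Prop)
    [DecidableRel R] (P : α → α → Prop) [DecidableRel P]
    (hR : ∀ y x b c, R (e (y, b)) (e (x, c)) ↔ P y x ∧ b = c) (h : γ → γ → M) :
    ∑ y, ∑ x, (if R y x then h y x else 0) =
      ∑ b, ∑ y, ∑ x, if P y x then h (e (y, b)) (e (x, b)) else 0 := by
  simp_rw [← e.sum_comp, Fintype.sum_prod_type, hR, ite_and]
  rw [Finset.sum_comm]
  refine Finset.sum_congr rfl fun b _ => Finset.sum_congr rfl fun y _ => ?_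
  simp only [Finset.sum_ite_irrel, Finset.sum_const_zero, Finset.sum_ite_eq, Finset.mem_univ,
    if_true]

namespace Fin

theorem natCast_val_one_sub (s : Fin 2) : (((1 - s : Fin 2) : ℕ) : ℤ) = 1 - (s : ℕ) := by
  fin_cases s <;> rfl

variable {α : Type*} {m n : ℕ}

theorem snoc_append_castLE (y : Fin m → α) (z : Fin n → α) (u : α) (h : m ≤ m + n + 1)
    (i : Fin m) : (snoc (append y z) u : Fin (m + n + 1) → α) (castLE h i) = y i := by
  rw [show castLE h i = (castAdd n i).castSucc from rfl, snoc_castSucc, append_left]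

theorem snoc_append_castLE_natAdd (y : Fin m → α) (z : Fin n → α) (u : α)
    (h : m + n ≤ m + n + 1) (j : Fin n) :
    (snoc (append y z) u : Fin (m + n + 1) → α) (castLE h (natAdd m j)) = z j := by
  rw [show castLE h (natAdd m j) = (natAdd m j).castSucc from rfl, snoc_castSucc, append_right]

theorem forall_snoc_append_iff {P : α → Prop} (y : Fin m → α) (z : Fin n → α) (u : α) :
    (∀ i, P ((snoc (append y z) u : Fin (m + n + 1) → α) i)) ↔
      (∀ i, P (y i)) ∧ (∀ j, P (z j)) ∧ P u := by
  simp [forall_fin_succ', forall_fin_add, and_assoc]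

end Fin

section Correlation

variable {q : ℕ}

theorem corr_snoc_zero {n : ℕ} (F G : (Fin (n + 1) → Fin 2) → ZMod q) (τ : Fin n → ℤ) :
    corr q (n + 1) F G (Fin.snoc τ 0) =
      ∑ u, corr q n (fun y => F (Fin.snoc y u)) (fun x => G (Fin.snoc x u)) τ := by
  exact Fintype.sum_sum_ite_of_equiv_prod ((Equiv.prodComm _ _).trans
    (Fin.snocEquiv fun _ => Fin 2)) _ _
    (fun y x u v => by simp [Fin.forall_fin_succ', sub_eq_zero, Fin.val_inj]) _

theorem corr_append_zero_right {m n : ℕ} (F G : (Fin (m + n) → Fin 2) → ZMod q)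
    (τ : Fin m → ℤ) :
    corr q (m + n) F G (Fin.append τ 0) =
      ∑ z, corr q m (fun y => F (Fin.append y z)) (fun x => G (Fin.append x z)) τ := by
  exact Fintype.sum_sum_ite_of_equiv_prod (Fin.appendEquiv m n) _ _
    (fun y x z w => by simp [Fin.forall_fin_add, sub_eq_zero, Fin.val_inj, funext_iff]) _

theorem corr_append_zero_left {m n : ℕ} (F G : (Fin (m + n) → Fin 2) → ZMod q)
    (τ : Fin n → ℤ) :
    corr q (m + n) F G (Fin.append 0 τ) =
      ∑ z, corr q n (fun y => F (Fin.append z y)) (fun x => G (Fin.append z x)) τ := by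
  exact Fintype.sum_sum_ite_of_equiv_prod ((Equiv.prodComm _ _).trans (Fin.appendEquiv m n)) _ _
    (fun y x z w => by
      simp [Fin.forall_fin_add, sub_eq_zero, Fin.val_inj, funext_iff, and_comm]) _

theorem corr_neg_comp_rev {m : ℕ} (u v : (Fin m → Fin 2) → ZMod q) (τ : Fin m → ℤ) :
    corr q m (fun y => -v (fun i => 1 - y i)) (fun x => -u (fun i => 1 - x i)) τ =
      corr q m u v τ := by
  -- `(y, x) ↦ (1 - x, 1 - y)` preserves `y - x` and swaps the roles of the two arrays.
  let r : (Fin m → Fin 2) ≃ (Fin m → Fin 2) := Equiv.piCongrRight fun _ => Equiv.subLeft 1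
  unfold corr
  rw [Finset.sum_comm, ← r.sum_comp]
  refine Finset.sum_congr rfl fun x _ => ?_
  rw [← r.sum_comp]
  refine Finset.sum_congr rfl fun y _ => ?_
  simp [r, Fin.natCast_val_one_sub, neg_add_eq_sub]

theorem corr_add_const {m : ℕ} (u v : (Fin m → Fin 2) → ZMod q) (k : ZMod q)
    (τ : Fin m → ℤ) :
    corr q m (fun y => u y + k) (fun x => v x + k) τ = corr q m u v τ := by
  simp [corr]

theorem corr_const_add {m : ℕ} (u v : (Fin m → Fin 2) → ZMod q) (k : ZMod q)
    (τ : Fin m → ℤ) :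
    corr q m (fun y => k + u y) (fun x => k + v x) τ = corr q m u v τ := by
  simp [corr]

variable {m₁ m₂ : ℕ} {f g : (Fin (m₁ + m₂ + 1) → Fin 2) → ZMod q}
  {A B : Fin 2 → (Fin m₁ → Fin 2) → ZMod q}
  {C D : Fin 2 → (Fin m₂ → Fin 2) → ZMod q}

theorem corr_snoc_append_zero_right
    (hf : ∀ y z u, f (Fin.snoc (Fin.append y z) u) = A u y + C u z) (τ : Fin m₁ → ℤ) :
    corr q (m₁ + m₂ + 1) f f (Fin.snoc (Fin.append τ 0) 0) =
      2 ^ m₂ * ∑ u, corr q m₁ (A u) (A u) τ := by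
  rw [corr_snoc_zero, Finset.mul_sum]
  refine Finset.sum_congr rfl fun u _ => ?_
  simp [corr_append_zero_right, hf, corr_add_const]

theorem corr_snoc_append_zero_left
    (hf : ∀ y z u, f (Fin.snoc (Fin.append y z) u) = A u y + C u z) (τ : Fin m₂ → ℤ) :
    corr q (m₁ + m₂ + 1) f f (Fin.snoc (Fin.append 0 τ) 0) =
      2 ^ m₁ * ∑ u, corr q m₂ (C u) (C u) τ := by
  rw [corr_snoc_zero, Finset.mul_sum]
  refine Finset.sum_congr rfl fun u _ => ?_
  simp [corr_append_zero_left, hf, corr_const_add]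

theorem IsGAP.sum_corr_left_eq_zero (hGAP : IsGAP q (m₁ + m₂ + 1) f g)
    (hf : ∀ y z u, f (Fin.snoc (Fin.append y z) u) = A u y + C u z)
    (hg : ∀ y z u, g (Fin.snoc (Fin.append y z) u) = B u y + D u z)
    {τ : Fin m₁ → ℤ} (hτ : ∀ i, τ i = -1 ∨ τ i = 0 ∨ τ i = 1) (hne : τ ≠ 0) :
    ∑ u, corr q m₁ (A u) (A u) τ + ∑ u, corr q m₁ (B u) (B u) τ = 0 := by
  have key := hGAP (Fin.snoc (Fin.append τ 0) 0)
    ((Fin.forall_snoc_append_iff (P := fun t : ℤ => t = -1 ∨ t = 0 ∨ t = 1) _ _ _).2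
      ⟨hτ, by simp, by simp⟩)
    fun h => hne (funext ((Fin.forall_snoc_append_iff (P := (· = 0)) _ _ _).1 (congrFun h)).1)
  rw [corr_snoc_append_zero_right hf, corr_snoc_append_zero_right hg, ← mul_add] at key
  exact (mul_eq_zero.1 key).resolve_left (pow_ne_zero _ two_ne_zero)

theorem IsGAP.sum_corr_right_eq_zero (hGAP : IsGAP q (m₁ + m₂ + 1) f g)
    (hf : ∀ y z u, f (Fin.snoc (Fin.append y z) u) = A u y + C u z)
    (hg : ∀ y z u, g (Fin.snoc (Fin.append y z) u) = B u y + D u z)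
    {τ : Fin m₂ → ℤ} (hτ : ∀ i, τ i = -1 ∨ τ i = 0 ∨ τ i = 1) (hne : τ ≠ 0) :
    ∑ u, corr q m₂ (C u) (C u) τ + ∑ u, corr q m₂ (D u) (D u) τ = 0 := by
  have key := hGAP (Fin.snoc (Fin.append 0 τ) 0)
    ((Fin.forall_snoc_append_iff (P := fun t : ℤ => t = -1 ∨ t = 0 ∨ t = 1) _ _ _).2
      ⟨by simp, hτ, by simp⟩)
    fun h => hne (funext ((Fin.forall_snoc_append_iff (P := (· = 0)) _ _ _).1 (congrFun h)).2.1)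
  rw [corr_snoc_append_zero_left hf, corr_snoc_append_zero_left hg, ← mul_add] at key
  exact (mul_eq_zero.1 key).resolve_left (pow_ne_zero _ two_ne_zero)

end Correlation

/-- if a GAP (f,g) of size 2^(m₁+m₂+1) decomposes as
    f(x₁,x₂,0)=a(x₁)+c(x₂), g(x₁,x₂,0)=b(x₁)+c(x₂),
    f(x₁,x₂,1)=−b*(x₁)+d(x₂), g(x₁,x₂,1)=−a*(x₁)+q/2+d(x₂),
    then (a,b) and (c,d) are Golay array pairs. -/
theorem gap_decompose (q m₁ m₂ : ℕ)
    (f g : (Fin (m₁ + m₂ + 1) → Fin 2) → ZMod q)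
    (hGAP : IsGAP q (m₁ + m₂ + 1) f g)
    (a b : (Fin m₁ → Fin 2) → ZMod q) (c d : (Fin m₂ → Fin 2) → ZMod q)
    (h0 : ∀ x : Fin (m₁ + m₂ + 1) → Fin 2, x (Fin.last (m₁ + m₂)) = 0 →
      f x = a (fun i => x (Fin.castLE (by omega) i)) + c (fun j => x (Fin.castLE (by omega) (Fin.natAdd m₁ j))) ∧
      g x = b (fun i => x (Fin.castLE (by omega) i)) + c (fun j => x (Fin.castLE (by omega) (Fin.natAdd m₁ j))))
    (h1 : ∀ x : Fin (m₁ + m₂ + 1) → Fin 2, x (Fin.last (m₁ + m₂)) = 1 →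
      f x = -(b (fun i => 1 - x (Fin.castLE (by omega) i))) + d (fun j => x (Fin.castLE (by omega) (Fin.natAdd m₁ j))) ∧
      g x = -(a (fun i => 1 - x (Fin.castLE (by omega) i))) + ((q / 2 : ℕ) : ZMod q) + d (fun j => x (Fin.castLE (by omega) (Fin.natAdd m₁ j)))) :
    IsGAP q m₁ a b ∧ IsGAP q m₂ c d := by
  have h0' y z := h0 (Fin.snoc (Fin.append y z) 0) (Fin.snoc_last ..)
  have h1' y z := h1 (Fin.snoc (Fin.append y z) 1) (Fin.snoc_last ..)
  simp only [Fin.snoc_append_castLE, Fin.snoc_append_castLE_natAdd] at h0' h1'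
  have hf : ∀ y z u, f (Fin.snoc (Fin.append y z) u) =
      ![a, fun y => -b (fun i => 1 - y i)] u y + ![c, d] u z := by
    simp [Fin.forall_fin_two, h0', h1']
  have hg : ∀ y z u, g (Fin.snoc (Fin.append y z) u) =
      ![b, fun y => -a (fun i => 1 - y i) + ((q / 2 : ℕ) : ZMod q)] u y + ![c, d] u z := by
    simp [Fin.forall_fin_two, h0', h1']
  refine ⟨fun τ hτ hne => ?_, fun τ hτ hne => ?_⟩
  · have key := hGAP.sum_corr_left_eq_zero hf hg hτ hne
    simp only [Fin.sum_univ_two, Matrix.cons_val_zero, Matrix.cons_val_one,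
      corr_add_const, corr_neg_comp_rev] at key
    linear_combination key / 2
  · have key := hGAP.sum_corr_right_eq_zero hf hg hτ hne
    simp only [Fin.sum_univ_two, Matrix.cons_val_zero, Matrix.cons_val_one] at key
    linear_combination key / 2
end

section
/- Let a, b : {0,1}^{m_1} → Z_q be q-ary arrays with generating functions A, B in the variables z_1,…,z_{m_1}, and let c, d : {0,1}^{m_2} → Z_q be q-ary arrays with generating functions C, D in the disjoint variables w_1,…,w_{m_2}. Suppose that for all z ∈ ℂ^{m_1} and w ∈ ℂ^{m_2} with all coordinates nonzero, (A(z)Ā(z⁻¹) + B(z)B̄(z⁻¹))·(C(w)C̄(w⁻¹) + D(w)D̄(w⁻¹)) = 2^{m_1+m_2+2}. Then A(z)Ā(z⁻¹) + B(z)B̄(z⁻¹) = 2^{m_1+1} and C(w)C̄(w⁻¹) + D(w)D̄(w⁻¹) = 2^{m_2+1} for all such z, w; equivalently, (a,b) is a Golay array pair of size 2^(m_1) and (c,d) is a Golay array pair of size 2^(m_2). -/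
open scoped BigOperators

/-! The two factors of the hypothesis depend on disjoint sets of variables and their product is a
nonzero constant, so each factor is constant on the torus `(ℂˣ)ᵐ`. If `A(z)Ā(z⁻¹) + B(z)B̄(z⁻¹)`
is a constant `α`, its Laurent coefficients, which are the sums `C_a(τ) + C_b(τ)`, can be read off
by averaging against `z^(-τ)` over the points whose coordinates are cube roots of unity: all
exponents that occur lie in `{-2, …, 2}`, and cube roots of unity already separate those. The
coefficient at `τ = 0` gives `α = 2^(m+1)`, the others give the Golay property. -/

open Finset

lemma zetaPow_eq_toCircle (q : ℕ) [NeZero q] (c : ZMod q) : zetaPow q c = ZMod.toCircle c := by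
  rw [zetaPow, zeta, ← Complex.exp_nat_mul, ZMod.toCircle_apply]
  congr 1
  ring

@[simp]
lemma zetaPow_zero (q : ℕ) : zetaPow q 0 = 1 := by
  simp [zetaPow]

lemma zetaPow_mul_conj (q : ℕ) (u v : ZMod q) :
    zetaPow q u * starRingEnd ℂ (zetaPow q v) = zetaPow q (u - v) := by
  rcases eq_or_ne q 0 with rfl | hq
  · simp [zetaPow, zeta]
  · have : NeZero q := ⟨hq⟩
    simp only [zetaPow_eq_toCircle, ← ZMod.stdAddChar_apply, ← AddChar.map_neg_eq_conj,
      ← AddChar.map_add_eq_mul, sub_eq_add_neg]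

theorem IsPrimitiveRoot.sum_pow_zpow {K : Type*} [Field K] {ω : K} {n : ℕ}
    (hω : IsPrimitiveRoot ω n) (t : ℤ) :
    ∑ j : Fin n, (ω ^ (j : ℕ)) ^ t = if (n : ℤ) ∣ t then (n : K) else 0 := by
  rcases n.eq_zero_or_pos with rfl | hn
  · simp
  have hone : ω ^ t = 1 ↔ (n : ℤ) ∣ t := by
    rw [← (hω.isUnit_unit hn.ne').zpow_eq_one_iff_dvd, ← Units.val_eq_one,
      Units.val_zpow_eq_zpow_val, IsUnit.unit_spec]
  have hcomm : ∀ j : ℕ, (ω ^ j) ^ t = (ω ^ t) ^ j := fun j => by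
    rw [← zpow_natCast, ← zpow_mul, mul_comm, zpow_mul, zpow_natCast]
  simp only [hcomm]
  rw [Fin.sum_univ_eq_sum_range (fun j => (ω ^ t) ^ j)]
  split_ifs with hdvd
  · simp [hone.2 hdvd]
  · rw [geom_sum_eq (mt hone.1 hdvd), ← hcomm, hω.pow_eq_one, one_zpow, sub_self, zero_div]

theorem IsPrimitiveRoot.sum_prod_pow_zpow {K ι : Type*} [Field K] [Fintype ι] [DecidableEq ι]
    {ω : K} {n : ℕ} (hω : IsPrimitiveRoot ω n) (t : ι → ℤ) :
    ∑ k : ι → Fin n, ∏ i, (ω ^ (k i : ℕ)) ^ t i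
      = if ∀ i, (n : ℤ) ∣ t i then (n : K) ^ Fintype.card ι else 0 := by
  rw [← Fintype.prod_sum (fun i (j : Fin n) => (ω ^ (j : ℕ)) ^ t i)]
  simp only [hω.sum_pow_zpow, Fintype.prod_ite_zero, prod_const, card_univ]

lemma forall_eq_of_mul_eq {α β M : Type*} [MonoidWithZero M] [IsCancelMulZero M]
    {F : α → M} {G : β → M} {p : α → Prop} {r : β → Prop} {c : M} (hc : c ≠ 0) (h : ∀ x y, p x → r y → F x * G y = c)
    {x₀ : α} {y₀ : β} (hx₀ : p x₀) (hy₀ : r y₀) :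
    (∀ x, p x → F x = F x₀) ∧ (∀ y, r y → G y = G y₀) := by
  have hF : F x₀ ≠ 0 := left_ne_zero_of_mul (h x₀ y₀ hx₀ hy₀ ▸ hc)
  have hG : G y₀ ≠ 0 := right_ne_zero_of_mul (h x₀ y₀ hx₀ hy₀ ▸ hc)
  exact ⟨fun x hx => mul_right_cancel₀ hG (by rw [h x y₀ hx hy₀, h x₀ y₀ hx₀ hy₀]),
    fun y hy => mul_left_cancel₀ hF (by rw [h x₀ y hx₀ hy, h x₀ y₀ hx₀ hy₀])⟩

/-- `A(z) Ā(z⁻¹)` for the generating function `A` of `f`. -/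
noncomputable def autocorrFun (q m : ℕ) (f : (Fin m → Fin 2) → ZMod q) (z : Fin m → ℂ) : ℂ :=
  genFun q m f z * genFunConj q m f (fun i => (z i)⁻¹)

section Autocorrelation

variable {q m : ℕ}

lemma autocorrFun_eq_sum (f : (Fin m → Fin 2) → ZMod q) {z : Fin m → ℂ} (hz : ∀ i, z i ≠ 0) :
    autocorrFun q m f z = ∑ y, ∑ x, zetaPow q (f y - f x) *
      ∏ i, z i ^ (((y i : ℕ) : ℤ) - ((x i : ℕ) : ℤ)) := by
  rw [autocorrFun, genFun, genFunConj, sum_mul_sum]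
  refine sum_congr rfl fun y _ => sum_congr rfl fun x _ => ?_
  rw [← zetaPow_mul_conj, mul_mul_mul_comm, ← prod_mul_distrib]
  congr 1
  refine prod_congr rfl fun i _ => ?_
  rw [zpow_sub₀ (hz i), zpow_natCast, zpow_natCast, inv_pow, div_eq_mul_inv]

lemma corr_self_zero (f : (Fin m → Fin 2) → ZMod q) : corr q m f f 0 = 2 ^ m := by
  have hdiag : ∀ x y : Fin m → Fin 2,
      (∀ i, ((y i : ℕ) : ℤ) - ((x i : ℕ) : ℤ) = 0) ↔ y = x := by
    intro x y
    simp [funext_iff, sub_eq_zero, Fin.ext_iff]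
  simp only [corr, Pi.zero_apply, hdiag]
  simp

lemma sum_autocorrFun_mul_eq_corr {ω : ℂ} {n : ℕ} (hω : IsPrimitiveRoot ω n) (hn : 2 < n)
    (f : (Fin m → Fin 2) → ZMod q) {τ : Fin m → ℤ} (hτ : ∀ i, |τ i| ≤ 1) :
    ∑ k : Fin m → Fin n,
        autocorrFun q m f (fun i => ω ^ (k i : ℕ)) * ∏ i, (ω ^ (k i : ℕ)) ^ (-τ i)
      = n ^ m * corr q m f f τ := by
  have hω0 : ω ≠ 0 := hω.ne_zero (by omega)
  have hdvd : ∀ x y : Fin m → Fin 2, (∀ i, (n : ℤ) ∣ ((y i : ℕ) : ℤ) - ((x i : ℕ) : ℤ) + -τ i) ↔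
      ∀ i, ((y i : ℕ) : ℤ) - ((x i : ℕ) : ℤ) = τ i := by
    refine fun x y => forall_congr' fun i => ⟨fun h => ?_, fun h => by simp [h]⟩
    have := (y i).isLt
    have := (x i).isLt
    have := abs_le.1 (hτ i)
    have := Int.eq_zero_of_abs_lt_dvd h (abs_lt.2 ⟨by omega, by omega⟩)
    omega
  simp_rw [autocorrFun_eq_sum f (fun i => pow_ne_zero _ hω0), sum_mul, mul_assoc,
    ← prod_mul_distrib, ← zpow_add₀ (pow_ne_zero _ hω0)]
  rw [sum_comm, corr, mul_sum]
  refine sum_congr rfl fun y _ => ?_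
  rw [sum_comm, mul_sum]
  refine sum_congr rfl fun x _ => ?_
  rw [← mul_sum, hω.sum_prod_pow_zpow]
  simp only [hdvd, Fintype.card_fin, mul_ite, mul_zero, mul_comm]

lemma isGAP_of_autocorrFun_add_eq (f g : (Fin m → Fin 2) → ZMod q) {α : ℂ}
    (h : ∀ z : Fin m → ℂ, (∀ i, z i ≠ 0) → autocorrFun q m f z + autocorrFun q m g z = α) :
    α = 2 ^ (m + 1) ∧ IsGAP q m f g := by
  obtain ⟨ω, hω⟩ : ∃ ω : ℂ, IsPrimitiveRoot ω 3 :=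
    ⟨_, Complex.isPrimitiveRoot_exp 3 (by norm_num)⟩
  have hω0 : ω ≠ 0 := hω.ne_zero (by norm_num)
  have h3 : (3 : ℂ) ^ m ≠ 0 := pow_ne_zero _ (by norm_num)
  have hcoeff : ∀ τ : Fin m → ℤ, (∀ i, |τ i| ≤ 1) →
      3 ^ m * (corr q m f f τ + corr q m g g τ) = if τ = 0 then 3 ^ m * α else 0 := by
    intro τ hτ
    have hdvd : (∀ i, (3 : ℤ) ∣ -τ i) ↔ τ = 0 := by
      refine ⟨fun hd => funext fun i => ?_, fun h0 i => by simp [h0]⟩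
      have := abs_le.1 (hτ i)
      have := hd i
      rw [Pi.zero_apply]
      omega
    have hf := sum_autocorrFun_mul_eq_corr hω (by norm_num) f hτ
    have hg := sum_autocorrFun_mul_eq_corr hω (by norm_num) g hτ
    push_cast at hf hg
    rw [mul_add, ← hf, ← hg, ← sum_add_distrib]
    simp_rw [← add_mul, h _ (fun i => pow_ne_zero _ hω0), ← mul_sum]
    rw [hω.sum_prod_pow_zpow]
    simp only [Nat.cast_ofNat, hdvd, Fintype.card_fin, mul_ite, mul_zero, mul_comm]
  refine ⟨?_, fun τ hτ hτ0 => ?_⟩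
  · have h0 := hcoeff 0 (by simp)
    rw [if_pos rfl, corr_self_zero, corr_self_zero] at h0
    exact (mul_left_cancel₀ h3 h0).symm.trans (by ring)
  · have := hcoeff τ (fun i => by rcases hτ i with h | h | h <;> simp [h])
    rw [if_neg hτ0] at this
    exact (mul_eq_zero.1 this).resolve_left h3

end Autocorrelation

theorem product_split_gap_general (q m₁ m₂ : ℕ)
    (a b : (Fin m₁ → Fin 2) → ZMod q) (c d : (Fin m₂ → Fin 2) → ZMod q)
    (h : ∀ (z : Fin m₁ → ℂ) (w : Fin m₂ → ℂ), (∀ i, z i ≠ 0) → (∀ j, w j ≠ 0) →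
      (genFun q m₁ a z * genFunConj q m₁ a (fun i => (z i)⁻¹)
          + genFun q m₁ b z * genFunConj q m₁ b (fun i => (z i)⁻¹)) *
        (genFun q m₂ c w * genFunConj q m₂ c (fun j => (w j)⁻¹)
          + genFun q m₂ d w * genFunConj q m₂ d (fun j => (w j)⁻¹))
        = (2 : ℂ) ^ (m₁ + m₂ + 2)) :
    (∀ z : Fin m₁ → ℂ, (∀ i, z i ≠ 0) →
      genFun q m₁ a z * genFunConj q m₁ a (fun i => (z i)⁻¹)
        + genFun q m₁ b z * genFunConj q m₁ b (fun i => (z i)⁻¹)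
        = (2 : ℂ) ^ (m₁ + 1)) ∧
    (∀ w : Fin m₂ → ℂ, (∀ j, w j ≠ 0) →
      genFun q m₂ c w * genFunConj q m₂ c (fun j => (w j)⁻¹)
        + genFun q m₂ d w * genFunConj q m₂ d (fun j => (w j)⁻¹)
        = (2 : ℂ) ^ (m₂ + 1)) ∧
    IsGAP q m₁ a b ∧ IsGAP q m₂ c d := by
  obtain ⟨hab, hcd⟩ := forall_eq_of_mul_eq
    (F := fun z => autocorrFun q m₁ a z + autocorrFun q m₁ b z)
    (G := fun w => autocorrFun q m₂ c w + autocorrFun q m₂ d w)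
    (pow_ne_zero _ two_ne_zero) h (x₀ := 1) (y₀ := 1)
    (fun _ => one_ne_zero) (fun _ => one_ne_zero)
  obtain ⟨hab₁, hab_gap⟩ := isGAP_of_autocorrFun_add_eq a b hab
  obtain ⟨hcd₁, hcd_gap⟩ := isGAP_of_autocorrFun_add_eq c d hcd
  exact ⟨fun z hz => (hab z hz).trans hab₁, fun w hw => (hcd w hw).trans hcd₁, hab_gap, hcd_gap⟩

/-- if (AĀ+BB̄)·(CC̄+DD̄) = 2^{m₁+m₂+2} on nonzero points (disjoint
    variables), then AĀ+BB̄ = 2^{m₁+1} and CC̄+DD̄ = 2^{m₂+1}; equivalently (a,b) and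
    (c,d) are Golay array pairs. -/
theorem product_split_gap (q m₁ m₂ : ℕ) (hq : 0 < q)
    (a b : (Fin m₁ → Fin 2) → ZMod q) (c d : (Fin m₂ → Fin 2) → ZMod q)
    (h : ∀ (z : Fin m₁ → ℂ) (w : Fin m₂ → ℂ), (∀ i, z i ≠ 0) → (∀ j, w j ≠ 0) →
      (genFun q m₁ a z * genFunConj q m₁ a (fun i => (z i)⁻¹)
          + genFun q m₁ b z * genFunConj q m₁ b (fun i => (z i)⁻¹)) *
        (genFun q m₂ c w * genFunConj q m₂ c (fun j => (w j)⁻¹)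
          + genFun q m₂ d w * genFunConj q m₂ d (fun j => (w j)⁻¹))
        = (2 : ℂ) ^ (m₁ + m₂ + 2)) :
    (∀ z : Fin m₁ → ℂ, (∀ i, z i ≠ 0) →
      genFun q m₁ a z * genFunConj q m₁ a (fun i => (z i)⁻¹)
        + genFun q m₁ b z * genFunConj q m₁ b (fun i => (z i)⁻¹)
        = (2 : ℂ) ^ (m₁ + 1)) ∧
    (∀ w : Fin m₂ → ℂ, (∀ j, w j ≠ 0) →
      genFun q m₂ c w * genFunConj q m₂ c (fun j => (w j)⁻¹)
        + genFun q m₂ d w * genFunConj q m₂ d (fun j => (w j)⁻¹)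
        = (2 : ℂ) ^ (m₂ + 1)) ∧
    IsGAP q m₁ a b ∧ IsGAP q m₂ c d :=
  product_split_gap_general q m₁ m₂ a b c d h
end

section
/- Let f, g : {0,1}^{m+1} → Z_q form a q-ary Golay array pair of size 2^(m+1), and define the q-ary arrays of size 2^(m): f_0(x) = f(x,0), f_1(x) = f(x,1), g_0(x) = g(x,0), g_1(x) = g(x,1) for x ∈ {0,1}^m. Then for every shift τ ∈ {−1,0,1}^m with τ ≠ 0, C_{f_0}(τ) + C_{f_1}(τ) + C_{g_0}(τ) + C_{g_1}(τ) = 0; that is, the four restricted arrays form a complementary set. -/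
open scoped BigOperators

/-- Reindexing equivalence for snoc. -/
def snocEquiv (m : ℕ) : (Fin m → Fin 2) × Fin 2 ≃ (Fin (m + 1) → Fin 2) where
  toFun p := Fin.snoc p.1 p.2
  invFun y := (fun i => y i.castSucc, y (Fin.last m))
  left_inv p := by
    ext i
    · simp
    · simp
  right_inv y := by
    funext i
    refine Fin.lastCases ?_ (fun j => ?_) i <;> simp

lemma corr_snoc (q m : ℕ) (u : (Fin (m + 1) → Fin 2) → ZMod q) (τ : Fin m → ℤ) :
    corr q (m + 1) u u (Fin.snoc τ 0) =
      corr q m (fun x => u (Fin.snoc x 0)) (fun x => u (Fin.snoc x 0)) τ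
        + corr q m (fun x => u (Fin.snoc x 1)) (fun x => u (Fin.snoc x 1)) τ := by
  unfold corr
  rw [← Equiv.sum_comp (snocEquiv m)]
  conv_lhs => enter [2, p]; rw [← Equiv.sum_comp (snocEquiv m)]
  rw [show ⇑(snocEquiv m) = fun p => Fin.snoc p.1 p.2 from rfl]
  simp only [snocEquiv, Equiv.coe_fn_mk]
  rw [Fintype.sum_prod_type]
  conv_lhs => enter [2, y]; enter [2, a]; rw [Fintype.sum_prod_type]
  have key : ∀ (y x : Fin m → Fin 2) (a b : Fin 2),
      (∀ i : Fin (m + 1), (((Fin.snoc y a : Fin (m+1) → Fin 2) i : ℕ) : ℤ) - (((Fin.snoc x b : Fin (m+1) → Fin 2) i : ℕ) : ℤ)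
        = (Fin.snoc τ (0:ℤ) : Fin (m+1) → ℤ) i)
      ↔ ((∀ i : Fin m, ((y i : ℕ) : ℤ) - ((x i : ℕ) : ℤ) = τ i) ∧ a = b) := by
    intro y x a b
    constructor
    · intro h
      constructor
      · intro i
        have := h i.castSucc
        simpa using this
      · have := h (Fin.last m)
        simp at this
        omega
    · rintro ⟨h1, rfl⟩ i
      refine Fin.lastCases ?_ (fun j => ?_) i
      · simp
      · simpa using h1 j
  have step : ∀ (y x : Fin m → Fin 2) (a b : Fin 2),
      (if ∀ i : Fin (m + 1), (((Fin.snoc y a : Fin (m+1) → Fin 2) i : ℕ) : ℤ) - (((Fin.snoc x b : Fin (m+1) → Fin 2) i : ℕ) : ℤ)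
          = (Fin.snoc τ (0:ℤ) : Fin (m+1) → ℤ) i
        then zetaPow q (u (Fin.snoc y a) - u (Fin.snoc x b)) else 0)
      = if a = b then
          (if ∀ i : Fin m, ((y i : ℕ) : ℤ) - ((x i : ℕ) : ℤ) = τ i
            then zetaPow q (u (Fin.snoc y a) - u (Fin.snoc x b)) else 0) else 0 := by
    intro y x a b
    simp only [key]
    by_cases hab : a = b <;> by_cases hc : ∀ i : Fin m, ((y i : ℕ) : ℤ) - ((x i : ℕ) : ℤ) = τ i
      <;> simp [hab, hc]
  simp only [step]
  have collapse : ∀ (y x : Fin m → Fin 2) (a : Fin 2),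
      (∑ b : Fin 2, if a = b then
          (if ∀ i : Fin m, ((y i : ℕ) : ℤ) - ((x i : ℕ) : ℤ) = τ i
            then zetaPow q (u (Fin.snoc y a) - u (Fin.snoc x b)) else 0) else 0)
      = (if ∀ i : Fin m, ((y i : ℕ) : ℤ) - ((x i : ℕ) : ℤ) = τ i
            then zetaPow q (u (Fin.snoc y a) - u (Fin.snoc x a)) else 0) := by
    intro y x a
    rw [Finset.sum_ite_eq]
    simp
  conv_lhs => enter [2, y]; enter [2, a]; enter [2, x]; rw [collapse]
  rw [Finset.sum_comm]
  rw [Fin.sum_univ_two]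

/-- if (f,g) is a GAP of size 2^(m+1), then the four restricted arrays
    f₀, f₁, g₀, g₁ form a complementary set. -/
theorem gap_restrictions_complementary_set (q m : ℕ) (hq : 0 < q)
    (f g : (Fin (m + 1) → Fin 2) → ZMod q) (hGAP : IsGAP q (m + 1) f g) :
    ∀ τ : Fin m → ℤ, (∀ i, τ i = -1 ∨ τ i = 0 ∨ τ i = 1) → τ ≠ 0 →
      corr q m (fun x => f (Fin.snoc x 0)) (fun x => f (Fin.snoc x 0)) τ
        + corr q m (fun x => f (Fin.snoc x 1)) (fun x => f (Fin.snoc x 1)) τ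
        + corr q m (fun x => g (Fin.snoc x 0)) (fun x => g (Fin.snoc x 0)) τ
        + corr q m (fun x => g (Fin.snoc x 1)) (fun x => g (Fin.snoc x 1)) τ = 0 := by
  intro τ hτ hτ0
  have h1 := hGAP (Fin.snoc τ 0) ?_ ?_
  · rw [corr_snoc, corr_snoc] at h1
    linear_combination h1
  · intro i
    refine Fin.lastCases ?_ (fun j => ?_) i
    · simp
    · simpa using hτ j
  · intro h
    apply hτ0
    funext i
    have : (Fin.snoc τ (0:ℤ) : Fin (m+1) → ℤ) i.castSucc = 0 := by rw [h]; rfl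
    simpa using this
end

section
/- Let f_0, f_1, g_0, g_1 : {0,1}^m → Z_q be q-ary arrays of size 2^(m) with generating functions F_0, F_1, G_0, G_1 satisfying F_0(z)·F̄_1(z⁻¹) + G_0(z)·Ḡ_1(z⁻¹) = 0 for all z ∈ ℂ^m with all coordinates nonzero. Suppose F_0 = A·C and G_0 = B·C, where: A and B are generating functions of q-ary arrays on the coordinates in a subset S_1 ⊆ {1,…,m} (involving only the variables z_k, k ∈ S_1), C is the generating function of a q-ary array on the complementary coordinates S_2 (involving only z_k, k ∈ S_2), and A and B have no common non-unit divisor in ℂ[z_1,…,z_m]. Then there exists a q-ary array d on the coordinates S_2 whose generating function D (involving only z_k, k ∈ S_2) satisfies F_1 = B̄*·D and G_1 = −Ā*·D, where for a polynomial P in the variables z_k (k ∈ S_1) of degree 1 in each such variable, P̄* denotes the polynomial satisfying P̄*(z) = (Π_{k∈S_1} z_k)·P̄(z⁻¹) on nonzero z, with P̄ the coefficient-wise complex conjugate. Moreover D is a greatest common divisor of F_1 and G_1. -/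
open scoped BigOperators

namespace GapAux

section Zeta

lemma zeta_ne_zero (q : ℕ) : zeta q ≠ 0 := Complex.exp_ne_zero _

lemma zetaPow_ne_zero (q : ℕ) (c : ZMod q) : zetaPow q c ≠ 0 :=
  pow_ne_zero _ (zeta_ne_zero q)

lemma zeta_pow_q (q : ℕ) (hq : 0 < q) : zeta q ^ q = 1 := by
  rw [zeta, ← Complex.exp_nat_mul]
  have hq' : (q:ℂ) ≠ 0 := Nat.cast_ne_zero.2 hq.ne'
  rw [mul_div_cancel₀ _ hq']
  exact Complex.exp_two_pi_mul_I

lemma zeta_pow_mod (q : ℕ) (hq : 0 < q) (n : ℕ) : zeta q ^ (n % q) = zeta q ^ n := by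
  conv_rhs => rw [← Nat.div_add_mod n q]
  rw [pow_add, pow_mul, zeta_pow_q q hq, one_pow, one_mul]

lemma zetaPow_add (q : ℕ) (hq : 0 < q) (a b : ZMod q) :
    zetaPow q (a + b) = zetaPow q a * zetaPow q b := by
  haveI : NeZero q := ⟨hq.ne'⟩
  rw [zetaPow, ZMod.val_add, zeta_pow_mod q hq, pow_add]; rfl

lemma zetaPow_zero (q : ℕ) (hq : 0 < q) : zetaPow q 0 = 1 := by
  haveI : NeZero q := ⟨hq.ne'⟩
  rw [zetaPow, ZMod.val_zero, pow_zero]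

lemma zetaPow_neg (q : ℕ) (hq : 0 < q) (c : ZMod q) :
    zetaPow q (-c) = (zetaPow q c)⁻¹ :=
  eq_inv_of_mul_eq_one_left (by
    rw [mul_comm, ← zetaPow_add q hq, add_neg_cancel, zetaPow_zero q hq])

lemma conj_zetaPow (q : ℕ) (hq : 0 < q) (c : ZMod q) :
    (starRingEnd ℂ) (zetaPow q c) = zetaPow q (-c) := by
  have h2 : (starRingEnd ℂ) (zeta q) = (zeta q)⁻¹ := by
    rw [zeta, ← Complex.exp_conj]
    have : (starRingEnd ℂ) (2 * Real.pi * Complex.I / q) = -(2 * Real.pi * Complex.I / q) := by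
      simp [map_div₀, Complex.conj_I, map_ofNat]; ring
    rw [this, Complex.exp_neg]
  rw [zetaPow_neg q hq, zetaPow, map_pow, h2, inv_pow]

end Zeta

open MvPolynomial

variable {m : ℕ}

lemma eq_of_eval_nonzero {P Q : MvPolynomial (Fin m) ℂ}
    (h : ∀ z : Fin m → ℂ, (∀ i, z i ≠ 0) → MvPolynomial.eval z P = MvPolynomial.eval z Q) :
    P = Q := by
  apply MvPolynomial.funext
  intro z
  have hset : {z : Fin m → ℂ | ∀ i, z i ≠ 0} = Set.pi Set.univ (fun _ => {(0:ℂ)}ᶜ) := by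
    ext w; simp [Set.mem_pi]
  have hd : Dense {z : Fin m → ℂ | ∀ i, z i ≠ 0} := by
    rw [hset]; exact dense_pi _ (fun i _ => dense_compl_singleton 0)
  have := Continuous.ext_on hd (MvPolynomial.continuous_eval P) (MvPolynomial.continuous_eval Q)
    (fun z hz => h z hz)
  exact congrFun this z

noncomputable def ind (T : Finset (Fin m)) : Fin m →₀ ℕ := ∑ k ∈ T, Finsupp.single k 1

lemma ind_apply (T : Finset (Fin m)) (k : Fin m) : ind T k = if k ∈ T then 1 else 0 := by
  classical
  rw [ind, Finsupp.finset_sum_apply]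
  simp [Finsupp.single_apply]

noncomputable def expOf (S : Finset (Fin m)) (u : ↥S → Fin 2) : Fin m →₀ ℕ :=
  ∑ k : ↥S, Finsupp.single (k : Fin m) ((u k : ℕ))

lemma expOf_apply (S : Finset (Fin m)) (u : ↥S → Fin 2) (k : Fin m) :
    expOf S u k = if h : k ∈ S then ((u ⟨k, h⟩ : ℕ)) else 0 := by
  classical
  rw [expOf, Finsupp.finset_sum_apply]
  by_cases h : k ∈ S
  · rw [dif_pos h]
    rw [Finset.sum_eq_single (⟨k, h⟩ : ↥S)]
    · simp
    · intro b _ hb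
      rw [Finsupp.single_apply, if_neg]
      intro hc; exact hb (Subtype.ext hc)
    · simp
  · rw [dif_neg h]
    apply Finset.sum_eq_zero
    intro b _
    rw [Finsupp.single_apply, if_neg]
    intro hc; exact h (hc ▸ b.2)

lemma expOf_le (S : Finset (Fin m)) (u : ↥S → Fin 2) : expOf S u ≤ ind S := by
  intro k
  rw [expOf_apply, ind_apply]
  by_cases h : k ∈ S
  · rw [dif_pos h, if_pos h]; exact Nat.lt_succ_iff.mp (u ⟨k, h⟩).2
  · rw [dif_neg h, if_neg h]

lemma expOf_injective (S : Finset (Fin m)) : Function.Injective (expOf S) := by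
  intro u v h
  funext k
  have := congrFun (congrArg (fun f : Fin m →₀ ℕ => (f : Fin m → ℕ)) h) (k : Fin m)
  simp only [expOf_apply, dif_pos k.2] at this
  exact Fin.ext (by simpa using this)

noncomputable def arrOf (S : Finset (Fin m)) (d : Fin m →₀ ℕ) (hd : d ≤ ind S) : ↥S → Fin 2 :=
  fun k => ⟨d (k : Fin m), by
    have := hd (k : Fin m)
    rw [ind_apply, if_pos k.2] at this
    omega⟩

lemma expOf_arrOf (S : Finset (Fin m)) (d : Fin m →₀ ℕ) (hd : d ≤ ind S) :
    expOf S (arrOf S d hd) = d := by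
  ext k
  rw [expOf_apply]
  by_cases h : k ∈ S
  · rw [dif_pos h]; rfl
  · rw [dif_neg h]
    have := hd k
    rw [ind_apply, if_neg h] at this
    omega

/-- flip an array on S. -/
def flipArr (S : Finset (Fin m)) (u : ↥S → Fin 2) : ↥S → Fin 2 :=
  fun k => ⟨1 - ((u k : ℕ)), by omega⟩

lemma ind_sub_expOf (S : Finset (Fin m)) (u : ↥S → Fin 2) :
    ind S - expOf S u = expOf S (flipArr S u) := by
  ext k
  rw [Finsupp.tsub_apply, ind_apply, expOf_apply, expOf_apply]
  by_cases h : k ∈ S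
  · rw [if_pos h, dif_pos h, dif_pos h]; rfl
  · rw [if_neg h, dif_neg h, dif_neg h]

lemma prod_mono {ι : Type*} [DecidableEq ι] (s : Finset ι) (e : ι → (Fin m →₀ ℕ)) :
    (∏ i ∈ s, (monomial (e i) (1:ℂ))) = monomial (∑ i ∈ s, e i) 1 := by
  induction s using Finset.induction with
  | empty => simp
  | insert _ _ h ih =>
      rw [Finset.prod_insert h, Finset.sum_insert h, ih, monomial_mul, one_mul]

lemma genPolyOn_eq (q : ℕ) (S : Finset (Fin m)) (a : (↥S → Fin 2) → ZMod q) :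
    genPolyOn q m S a = ∑ u : ↥S → Fin 2, monomial (expOf S u) (zetaPow q (a u)) := by
  classical
  unfold genPolyOn
  apply Finset.sum_congr rfl
  intro u _
  have : (∏ k : ↥S, (X (k : Fin m) : MvPolynomial (Fin m) ℂ) ^ ((u k : ℕ)))
      = monomial (expOf S u) 1 := by
    rw [expOf, ← prod_mono]
    apply Finset.prod_congr rfl
    intro k _
    rw [X_pow_eq_monomial]
  rw [this, C_mul_monomial, mul_one]

lemma coeff_genPolyOn (q : ℕ) (S : Finset (Fin m)) (a : (↥S → Fin 2) → ZMod q)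
    (u : ↥S → Fin 2) : coeff (expOf S u) (genPolyOn q m S a) = zetaPow q (a u) := by
  rw [genPolyOn_eq, coeff_sum, Finset.sum_eq_single u]
  · rw [coeff_monomial, if_pos rfl]
  · intro v _ hv
    rw [coeff_monomial, if_neg (fun hc => hv (expOf_injective S hc))]
  · simp

lemma support_genPolyOn (q : ℕ) (S : Finset (Fin m)) (a : (↥S → Fin 2) → ZMod q)
    {d : Fin m →₀ ℕ} (hd : d ∈ (genPolyOn q m S a).support) : ∃ u, d = expOf S u := by
  by_contra hc
  push_neg at hc
  rw [mem_support_iff] at hd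
  apply hd
  rw [genPolyOn_eq, coeff_sum]
  apply Finset.sum_eq_zero
  intro u _
  rw [coeff_monomial, if_neg (fun h => hc u h.symm)]

lemma support_genPolyOn_le (q : ℕ) (S : Finset (Fin m)) (a : (↥S → Fin 2) → ZMod q) :
    ∀ d ∈ (genPolyOn q m S a).support, d ≤ ind S := by
  intro d hd
  obtain ⟨u, rfl⟩ := support_genPolyOn q S a hd
  exact expOf_le S u

lemma genPolyOn_ne_zero (q : ℕ) (hq : 0 < q) (S : Finset (Fin m))
    (a : (↥S → Fin 2) → ZMod q) : genPolyOn q m S a ≠ 0 := by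
  intro h
  have := coeff_genPolyOn q S a (fun _ => 0)
  rw [h, coeff_zero] at this
  exact zetaPow_ne_zero q _ this.symm

end GapAux
namespace GapAux

open MvPolynomial

variable {m : ℕ}

noncomputable def expAll (x : Fin m → Fin 2) : Fin m →₀ ℕ :=
  ∑ i, Finsupp.single i ((x i : ℕ))

lemma expAll_apply (x : Fin m → Fin 2) (k : Fin m) : expAll x k = (x k : ℕ) := by
  classical
  rw [expAll, Finsupp.finset_sum_apply, Finset.sum_eq_single k]
  · simp
  · intro b _ hb; rw [Finsupp.single_apply, if_neg hb]
  · simp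

lemma expAll_le (x : Fin m → Fin 2) : expAll x ≤ ind (Finset.univ : Finset (Fin m)) := by
  intro k
  rw [expAll_apply, ind_apply, if_pos (Finset.mem_univ k)]
  exact Nat.lt_succ_iff.mp (x k).2

lemma expAll_injective : Function.Injective (expAll (m := m)) := by
  intro u v h
  funext k
  have : expAll u k = expAll v k := by rw [h]
  rw [expAll_apply, expAll_apply] at this
  exact Fin.ext this

lemma genPoly_eq (q : ℕ) (f : (Fin m → Fin 2) → ZMod q) :
    genPoly q m f = ∑ x : Fin m → Fin 2, monomial (expAll x) (zetaPow q (f x)) := by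
  classical
  unfold genPoly
  apply Finset.sum_congr rfl
  intro x _
  have : (∏ i, (X i : MvPolynomial (Fin m) ℂ) ^ ((x i : ℕ)))
      = monomial (expAll x) 1 := by
    rw [expAll, ← prod_mono]
    apply Finset.prod_congr rfl
    intro k _
    rw [X_pow_eq_monomial]
  rw [this, C_mul_monomial, mul_one]

lemma coeff_genPoly (q : ℕ) (f : (Fin m → Fin 2) → ZMod q) (x : Fin m → Fin 2) :
    coeff (expAll x) (genPoly q m f) = zetaPow q (f x) := by
  rw [genPoly_eq, coeff_sum, Finset.sum_eq_single x]
  · rw [coeff_monomial, if_pos rfl]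
  · intro v _ hv
    rw [coeff_monomial, if_neg (fun hc => hv (expAll_injective hc))]
  · simp

lemma support_genPoly (q : ℕ) (f : (Fin m → Fin 2) → ZMod q)
    {d : Fin m →₀ ℕ} (hd : d ∈ (genPoly q m f).support) : ∃ x, d = expAll x := by
  by_contra hc
  push_neg at hc
  rw [mem_support_iff] at hd
  apply hd
  rw [genPoly_eq, coeff_sum]
  apply Finset.sum_eq_zero
  intro u _
  rw [coeff_monomial, if_neg (fun h => hc u h.symm)]

lemma support_genPoly_le (q : ℕ) (f : (Fin m → Fin 2) → ZMod q) :
    ∀ d ∈ (genPoly q m f).support, d ≤ ind (Finset.univ : Finset (Fin m)) := by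
  intro d hd
  obtain ⟨x, rfl⟩ := support_genPoly q f hd
  exact expAll_le x

/-! ### The reversal/conjugation operator -/

noncomputable def rev (T : Finset (Fin m)) (P : MvPolynomial (Fin m) ℂ) : MvPolynomial (Fin m) ℂ :=
  ∑ d ∈ P.support, monomial (ind T - d) ((starRingEnd ℂ) (coeff d P))

lemma support_rev_le (T : Finset (Fin m)) (P : MvPolynomial (Fin m) ℂ) {e : Fin m →₀ ℕ}
    (he : e ∈ (rev T P).support) : e ≤ ind T := by
  by_contra hc
  rw [mem_support_iff] at he
  apply he
  rw [rev, coeff_sum]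
  apply Finset.sum_eq_zero
  intro d _
  rw [coeff_monomial, if_neg]
  intro h; exact hc (h ▸ tsub_le_self)

lemma coeff_rev (T : Finset (Fin m)) (P : MvPolynomial (Fin m) ℂ)
    (hP : ∀ d ∈ P.support, d ≤ ind T) {e : Fin m →₀ ℕ} (he : e ≤ ind T) :
    coeff e (rev T P) = (starRingEnd ℂ) (coeff (ind T - e) P) := by
  rw [rev, coeff_sum]
  by_cases hmem : ind T - e ∈ P.support
  · rw [Finset.sum_eq_single (ind T - e)]
    · rw [coeff_monomial, if_pos (tsub_tsub_cancel_of_le he)]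
    · intro d hd hne
      rw [coeff_monomial, if_neg]
      intro h
      exact hne (by rw [← tsub_tsub_cancel_of_le (hP d hd), h])
    · intro h; exact absurd hmem h
  · have h0 : coeff (ind T - e) P = 0 := notMem_support_iff.mp hmem
    rw [h0, map_zero]
    apply Finset.sum_eq_zero
    intro d hd
    rw [coeff_monomial, if_neg]
    intro h
    have hde : d = ind T - e := by rw [← tsub_tsub_cancel_of_le (hP d hd), h]
    exact hmem (hde ▸ hd)

lemma prod_pow_ind (T : Finset (Fin m)) (z : Fin m → ℂ) :
    ∏ i, z i ^ (ind T i) = ∏ k ∈ T, z k := by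
  rw [← Finset.prod_subset (Finset.subset_univ T)
    (fun i _ hi => by rw [ind_apply, if_neg hi, pow_zero])]
  apply Finset.prod_congr rfl
  intro i hi; rw [ind_apply, if_pos hi, pow_one]

lemma finsupp_prod_sub (T : Finset (Fin m)) (d : Fin m →₀ ℕ) (hd : d ≤ ind T)
    (z : Fin m → ℂ) (hz : ∀ i, z i ≠ 0) :
    (ind T - d).prod (fun i e => z i ^ e)
      = (∏ k ∈ T, z k) * d.prod (fun i e => (z i)⁻¹ ^ e) := by
  rw [Finsupp.prod_fintype _ _ (fun i => pow_zero _),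
      Finsupp.prod_fintype _ _ (fun i => pow_zero _), ← prod_pow_ind T z,
      ← Finset.prod_mul_distrib]
  apply Finset.prod_congr rfl
  intro i _
  rw [Finsupp.tsub_apply, inv_pow, pow_sub₀ _ (hz i) (hd i)]

lemma eval_rev (T : Finset (Fin m)) (P : MvPolynomial (Fin m) ℂ)
    (hP : ∀ d ∈ P.support, d ≤ ind T) (z : Fin m → ℂ) (hz : ∀ i, z i ≠ 0) :
    eval z (rev T P) = (∏ k ∈ T, z k) *
      eval (fun i => (z i)⁻¹) (map (starRingEnd ℂ) P) := by
  conv_rhs => rw [P.as_sum]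
  rw [map_sum (map (starRingEnd ℂ)), map_sum (eval fun i => (z i)⁻¹), rev,
    map_sum (eval z), Finset.mul_sum]
  apply Finset.sum_congr rfl
  intro d hd
  rw [map_monomial, eval_monomial, eval_monomial, finsupp_prod_sub T d (hP d hd) z hz]
  ring

lemma rev_rev (T : Finset (Fin m)) (P : MvPolynomial (Fin m) ℂ)
    (hP : ∀ d ∈ P.support, d ≤ ind T) : rev T (rev T P) = P := by
  apply eq_of_eval_nonzero
  intro z hz
  rw [eval_rev T _ (fun e he => support_rev_le T P he) z hz]
  have hmap : map (starRingEnd ℂ) (rev T P)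
      = ∑ d ∈ P.support, monomial (ind T - d) (coeff d P) := by
    rw [rev, map_sum (map (starRingEnd ℂ))]
    apply Finset.sum_congr rfl
    intro d _
    rw [map_monomial, Complex.conj_conj]
  rw [hmap, map_sum (eval fun i => (z i)⁻¹), Finset.mul_sum]
  conv_rhs => rw [P.as_sum, map_sum (eval z)]
  apply Finset.sum_congr rfl
  intro d hd
  rw [eval_monomial, eval_monomial,
    finsupp_prod_sub T d (hP d hd) _ (fun i => inv_ne_zero (hz i))]
  have : (d.prod fun i e => ((z i)⁻¹)⁻¹ ^ e) = d.prod fun i e => (z i) ^ e := by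
    apply Finsupp.prod_congr; intro i _; rw [inv_inv]
  rw [this, Finset.prod_inv_distrib]
  have hA : (∏ k ∈ T, z k) ≠ 0 := Finset.prod_ne_zero_iff.2 (fun i _ => hz i)
  field_simp

lemma rev_neg (T : Finset (Fin m)) (P : MvPolynomial (Fin m) ℂ) :
    rev T (-P) = -(rev T P) := by
  rw [rev, rev, ← Finset.sum_neg_distrib, support_neg]
  apply Finset.sum_congr rfl
  intro d _
  rw [coeff_neg, map_neg, map_neg]

lemma ind_union (T₁ T₂ : Finset (Fin m)) (h : Disjoint T₁ T₂) :
    ind (T₁ ∪ T₂) = ind T₁ + ind T₂ := by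
  ext k
  rw [Finsupp.add_apply, ind_apply, ind_apply, ind_apply]
  by_cases h1 : k ∈ T₁
  · have h2 : k ∉ T₂ := fun h2 => (Finset.disjoint_left.mp h) h1 h2
    rw [if_pos (Finset.mem_union.mpr (Or.inl h1)), if_pos h1, if_neg h2]
  · by_cases h2 : k ∈ T₂
    · rw [if_pos (Finset.mem_union.mpr (Or.inr h2)), if_neg h1, if_pos h2]
    · rw [if_neg (fun hc => by rcases Finset.mem_union.mp hc with h | h <;> tauto),
        if_neg h1, if_neg h2]

lemma support_mul_le {T₁ T₂ : Finset (Fin m)} {P Q : MvPolynomial (Fin m) ℂ}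
    (hP : ∀ d ∈ P.support, d ≤ ind T₁) (hQ : ∀ d ∈ Q.support, d ≤ ind T₂)
    (h : Disjoint T₁ T₂) :
    ∀ d ∈ (P * Q).support, d ≤ ind (T₁ ∪ T₂) := by
  classical
  intro d hd
  obtain ⟨d₁, hd₁, d₂, hd₂, rfl⟩ := Finset.mem_add.mp (MvPolynomial.support_mul P Q hd)
  rw [ind_union T₁ T₂ h]
  exact add_le_add (hP d₁ hd₁) (hQ d₂ hd₂)

lemma rev_mul (T₁ T₂ : Finset (Fin m)) (P Q : MvPolynomial (Fin m) ℂ)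
    (hP : ∀ d ∈ P.support, d ≤ ind T₁) (hQ : ∀ d ∈ Q.support, d ≤ ind T₂)
    (h : Disjoint T₁ T₂) :
    rev (T₁ ∪ T₂) (P * Q) = rev T₁ P * rev T₂ Q := by
  apply eq_of_eval_nonzero
  intro z hz
  rw [eval_rev _ _ (support_mul_le hP hQ h) z hz, eval_mul,
    eval_rev _ _ hP z hz, eval_rev _ _ hQ z hz, map_mul, eval_mul,
    Finset.prod_union h]
  ring

end GapAux
namespace GapAux

open MvPolynomial

variable {m : ℕ}

lemma apply_le_degreeOf {P : MvPolynomial (Fin m) ℂ} {d : Fin m →₀ ℕ}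
    (hd : d ∈ P.support) (k : Fin m) : d k ≤ degreeOf k P := by
  rw [degreeOf_eq_sup]; exact Finset.le_sup (f := fun e => e k) hd

lemma degreeOf_le_ind {T : Finset (Fin m)} {P : MvPolynomial (Fin m) ℂ}
    (h : ∀ d ∈ P.support, d ≤ ind T) (k : Fin m) : degreeOf k P ≤ ind T k :=
  degreeOf_le_iff.mpr fun d hd => h d hd k

lemma expOf_zeroArr (S : Finset (Fin m)) : expOf S (fun _ => (0 : Fin 2)) = 0 := by
  ext k
  rw [expOf_apply]
  by_cases h : k ∈ S
  · rw [dif_pos h]; rfl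
  · rw [dif_neg h]; rfl

lemma expOf_onesArr (S : Finset (Fin m)) : expOf S (fun _ => (1 : Fin 2)) = ind S := by
  ext k
  rw [expOf_apply, ind_apply]
  by_cases h : k ∈ S
  · rw [dif_pos h, if_pos h]; rfl
  · rw [dif_neg h, if_neg h]

lemma constantCoeff_genPolyOn (q : ℕ) (S : Finset (Fin m)) (a : (↥S → Fin 2) → ZMod q) :
    coeff 0 (genPolyOn q m S a) = zetaPow q (a (fun _ => 0)) := by
  rw [← expOf_zeroArr S, coeff_genPolyOn]

lemma degreeOf_genPolyOn (q : ℕ) (S : Finset (Fin m)) (a : (↥S → Fin 2) → ZMod q)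
    (k : Fin m) : degreeOf k (genPolyOn q m S a) = ind S k := by
  apply le_antisymm (degreeOf_le_ind (support_genPolyOn_le q S a) k)
  by_cases h : k ∈ S
  · rw [ind_apply, if_pos h]
    have hmem : expOf S (fun _ => (1 : Fin 2)) ∈ (genPolyOn q m S a).support := by
      rw [mem_support_iff, coeff_genPolyOn]
      exact zetaPow_ne_zero q _
    have := apply_le_degreeOf hmem k
    rwa [expOf_apply, dif_pos h] at this
  · rw [ind_apply, if_neg h]
    exact Nat.zero_le _

lemma rev_genPolyOn (q : ℕ) (hq : 0 < q) (S : Finset (Fin m)) (a : (↥S → Fin 2) → ZMod q) :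
    rev S (genPolyOn q m S a) = genPolyOn q m S (fun u => -(a (flipArr S u))) := by
  apply MvPolynomial.ext
  intro d
  by_cases hd : d ≤ ind S
  · obtain ⟨u, rfl⟩ : ∃ u, d = expOf S u := ⟨arrOf S d hd, (expOf_arrOf S d hd).symm⟩
    rw [coeff_rev S _ (support_genPolyOn_le q S a) (expOf_le S u), ind_sub_expOf,
      coeff_genPolyOn, coeff_genPolyOn, conj_zetaPow q hq]
  · have h1 : coeff d (rev S (genPolyOn q m S a)) = 0 := by
      rw [← notMem_support_iff]
      intro hmem
      exact hd (support_rev_le S _ hmem)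
    have h2 : coeff d (genPolyOn q m S (fun u => -(a (flipArr S u)))) = 0 := by
      rw [← notMem_support_iff]
      intro hmem
      exact hd (support_genPolyOn_le q S _ d hmem)
    rw [h1, h2]

lemma degreeOf_mul_eq (k : Fin m) {P Q : MvPolynomial (Fin m) ℂ} (hP : P ≠ 0) (hQ : Q ≠ 0) :
    degreeOf k (P * Q) = degreeOf k P + degreeOf k Q := by
  cases m with
  | zero => exact k.elim0
  | succ n =>
    have key : ∀ R : MvPolynomial (Fin (n+1)) ℂ,
        degreeOf k R = (Polynomial.natDegree
          (MvPolynomial.finSuccEquiv ℂ n (rename (Equiv.swap k 0) R))) := by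
      intro R
      rw [natDegree_finSuccEquiv]
      have := MvPolynomial.degreeOf_rename_of_injective
        (f := (Equiv.swap k (0 : Fin (n+1)))) (Equiv.injective _) (p := R) k
      rw [Equiv.swap_apply_left] at this
      exact this.symm
    have hP' : (MvPolynomial.finSuccEquiv ℂ n (rename (Equiv.swap k 0) P)) ≠ 0 := by
      intro h
      apply hP
      have h1 : rename (Equiv.swap k (0 : Fin (n+1))) P = 0 :=
        (map_eq_zero_iff _ (AlgEquiv.injective _)).mp h
      have h2 := (map_eq_zero_iff (rename (Equiv.swap k (0 : Fin (n+1))))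
        (rename_injective _ (Equiv.injective _))).mp h1
      exact h2
    have hQ' : (MvPolynomial.finSuccEquiv ℂ n (rename (Equiv.swap k 0) Q)) ≠ 0 := by
      intro h
      apply hQ
      have h1 : rename (Equiv.swap k (0 : Fin (n+1))) Q = 0 :=
        (map_eq_zero_iff _ (AlgEquiv.injective _)).mp h
      exact (map_eq_zero_iff (rename (Equiv.swap k (0 : Fin (n+1))))
        (rename_injective _ (Equiv.injective _))).mp h1
    rw [key, key, key, map_mul, map_mul, Polynomial.natDegree_mul hP' hQ']

lemma degreeOf_of_isUnit {P : MvPolynomial (Fin m) ℂ} (h : IsUnit P) (k : Fin m) :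
    degreeOf k P = 0 := by
  obtain ⟨u, rfl⟩ := h
  have h1 : (u : MvPolynomial (Fin m) ℂ)
      * ((u⁻¹ : (MvPolynomial (Fin m) ℂ)ˣ) : MvPolynomial (Fin m) ℂ) = 1 := u.mul_inv
  have hu : (u : MvPolynomial (Fin m) ℂ) ≠ 0 := u.ne_zero
  have hv : ((u⁻¹ : (MvPolynomial (Fin m) ℂ)ˣ) : MvPolynomial (Fin m) ℂ) ≠ 0 := Units.ne_zero _
  have h3 := degreeOf_mul_eq k hu hv
  rw [h1] at h3
  have h2 : degreeOf k (1 : MvPolynomial (Fin m) ℂ) = 0 := by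
    rw [← C_1, degreeOf_C]
  omega

end GapAux

namespace GapAux

open MvPolynomial

variable {m : ℕ}

lemma rev_C (T : Finset (Fin m)) {c : ℂ} (hc : c ≠ 0) :
    rev T (C c) = monomial (ind T) ((starRingEnd ℂ) c) := by
  rw [rev, C_apply, support_monomial, if_neg hc, Finset.sum_singleton, tsub_zero]
  congr 1
  rw [← C_apply, coeff_zero_C]

lemma coeff_mul_corner {S₁ S₂ : Finset (Fin m)} (h : Disjoint S₁ S₂)
    {P Q : MvPolynomial (Fin m) ℂ}
    (hP : ∀ d ∈ P.support, d ≤ ind S₁) {e : Fin m →₀ ℕ} (he : e ≤ ind S₂) :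
    coeff e (P * Q) = coeff 0 P * coeff e Q := by
  rw [coeff_mul, Finset.sum_eq_single ((0 : Fin m →₀ ℕ), e)]
  · intro p hp hne
    rw [Finset.HasAntidiagonal.mem_antidiagonal] at hp
    by_cases h1 : coeff p.1 P = 0
    · rw [h1, zero_mul]
    · exfalso
      have hp1 : p.1 ∈ P.support := mem_support_iff.mpr h1
      have hle1 : p.1 ≤ ind S₁ := hP p.1 hp1
      have hle2 : p.1 ≤ ind S₂ := le_trans (hp ▸ self_le_add_right p.1 p.2) he
      have hp10 : p.1 = 0 := by
        ext k
        have hle1' := hle1 k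
        have hle2' := hle2 k
        rw [ind_apply] at hle1' hle2'
        have h0 : (0 : Fin m →₀ ℕ) k = 0 := rfl
        rw [h0]
        by_cases hk : k ∈ S₁
        · have hk2 : k ∉ S₂ := fun hk2 => (Finset.disjoint_left.mp h) hk hk2
          rw [if_neg hk2] at hle2'
          omega
        · rw [if_neg hk] at hle1'
          omega
      apply hne
      have : p.2 = e := by rw [← hp, hp10, zero_add]
      exact Prod.ext hp10 this
  · intro hnm
    exact absurd (Finset.HasAntidiagonal.mem_antidiagonal.mpr (zero_add e)) hnm

lemma eq_monomial_of_degreeOf_eq_zero {P : MvPolynomial (Fin m) ℂ}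
    (h : ∀ k, degreeOf k P = 0) : P = C (coeff 0 P) := by
  apply MvPolynomial.ext
  intro d
  by_cases hd : d = 0
  · subst hd; rw [coeff_zero_C]
  · rw [coeff_C, if_neg (fun hc => hd hc.symm), ← notMem_support_iff]
    intro hmem
    apply hd
    ext k
    have := apply_le_degreeOf hmem k
    rw [h k] at this
    simpa using this

lemma dvd_of_dvd_mul_relprime {R : Type*} [CommRing R] [IsDomain R]
    [UniqueFactorizationMonoid R] {k X Y D : R}
    (h1 : k ∣ X * D) (h2 : k ∣ Y * D) (h : IsRelPrime X Y) : k ∣ D := by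
  letI := UniqueFactorizationMonoid.toGCDMonoid R
  have h3 : k ∣ gcd (X * D) (Y * D) := dvd_gcd h1 h2
  have h4 : Associated (gcd (X * D) (Y * D)) (gcd X Y * D) := gcd_mul_right' D X Y
  have h5 : IsUnit (gcd X Y) := h (gcd_dvd_left X Y) (gcd_dvd_right X Y)
  obtain ⟨v, hv⟩ := h5
  have h6 : Associated (gcd X Y * D) D := by
    rw [← hv]
    exact ⟨v⁻¹, by rw [mul_comm (v : R) D, mul_assoc, Units.mul_inv, mul_one]⟩
  exact h3.trans ((h4.trans h6).dvd)

end GapAux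
namespace GapAux

open MvPolynomial

variable {m : ℕ}

lemma flipArr_flipArr (S : Finset (Fin m)) (u : ↥S → Fin 2) :
    flipArr S (flipArr S u) = u := by
  funext k
  apply Fin.ext
  show 1 - (1 - (u k : ℕ)) = (u k : ℕ)
  have := (u k).isLt
  omega

lemma rev_rev_genPolyOn (q : ℕ) (hq : 0 < q) (S : Finset (Fin m))
    (a : (↥S → Fin 2) → ZMod q) :
    rev S (genPolyOn q m S (fun u => -(a (flipArr S u)))) = genPolyOn q m S a := by
  rw [rev_genPolyOn q hq S]
  congr 1
  funext u
  rw [flipArr_flipArr, neg_neg]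

lemma isRelPrime_rev (q : ℕ) (hq : 0 < q) (S : Finset (Fin m))
    (a b : (↥S → Fin 2) → ZMod q)
    (hcop : IsRelPrime (genPolyOn q m S a) (genPolyOn q m S b)) :
    IsRelPrime (rev S (genPolyOn q m S a)) (rev S (genPolyOn q m S b)) := by
  classical
  intro P hPA hPB
  rw [rev_genPolyOn q hq S a] at hPA
  rw [rev_genPolyOn q hq S b] at hPB
  set a' : (↥S → Fin 2) → ZMod q := fun u => -(a (flipArr S u)) with ha'
  set b' : (↥S → Fin 2) → ZMod q := fun u => -(b (flipArr S u)) with hb'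
  obtain ⟨QA, hQA⟩ := hPA
  obtain ⟨QB, hQB⟩ := hPB
  have hA'ne : genPolyOn q m S a' ≠ 0 := genPolyOn_ne_zero q hq S a'
  have hB'ne : genPolyOn q m S b' ≠ 0 := genPolyOn_ne_zero q hq S b'
  have hPne : P ≠ 0 := fun h => hA'ne (by rw [hQA, h, zero_mul])
  have hQAne : QA ≠ 0 := fun h => hA'ne (by rw [hQA, h, mul_zero])
  have hQBne : QB ≠ 0 := fun h => hB'ne (by rw [hQB, h, mul_zero])
  have hdegA : ∀ k, degreeOf k P + degreeOf k QA = ind S k := by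
    intro k
    rw [← degreeOf_mul_eq k hPne hQAne, ← hQA, degreeOf_genPolyOn]
  have hdegB : ∀ k, degreeOf k P + degreeOf k QB = ind S k := by
    intro k
    rw [← degreeOf_mul_eq k hPne hQBne, ← hQB, degreeOf_genPolyOn]
  set T : Finset (Fin m) := S.filter (fun k => degreeOf k P = 1) with hT
  have hTS : T ⊆ S := Finset.filter_subset _ _
  have hindT : ∀ k, ind T k = degreeOf k P := by
    intro k
    rw [ind_apply]
    by_cases hk : k ∈ T
    · rw [if_pos hk]
      exact ((Finset.mem_filter.mp hk).2).symm
    · rw [if_neg hk]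
      have h1 : degreeOf k P ≤ ind S k :=
        le_trans (Nat.le_add_right _ _) (le_of_eq (hdegA k))
      by_cases hkS : k ∈ S
      · rw [ind_apply, if_pos hkS] at h1
        have h2 : degreeOf k P ≠ 1 := fun hc => hk (Finset.mem_filter.mpr ⟨hkS, hc⟩)
        omega
      · rw [ind_apply, if_neg hkS] at h1
        omega
  have hsuppP : ∀ d ∈ P.support, d ≤ ind T := by
    intro d hd k
    rw [hindT k]
    exact apply_le_degreeOf hd k
  have hsuppQ : ∀ (Q : MvPolynomial (Fin m) ℂ),
      (∀ k, degreeOf k P + degreeOf k Q = ind S k) →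
      ∀ d ∈ Q.support, d ≤ ind (S \ T) := by
    intro Q hdeg d hd k
    have h1 := apply_le_degreeOf hd k
    have h2 := hdeg k
    have h3 := hindT k
    rw [ind_apply] at h2
    rw [ind_apply]
    by_cases hkS : k ∈ S
    · by_cases hkT : k ∈ T
      · rw [if_neg (fun hc => (Finset.mem_sdiff.mp hc).2 hkT)]
        rw [if_pos hkS] at h2
        rw [ind_apply, if_pos hkT] at h3
        omega
      · rw [if_pos (Finset.mem_sdiff.mpr ⟨hkS, hkT⟩)]
        rw [if_pos hkS] at h2
        omega
    · have hkT : k ∉ T := fun hc => hkS (hTS hc)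
      rw [if_neg (fun hc => hkS (Finset.mem_sdiff.mp hc).1)]
      rw [if_neg hkS] at h2
      omega
  have hdisj : Disjoint T (S \ T) := Finset.disjoint_sdiff
  have hunion : T ∪ (S \ T) = S := Finset.union_sdiff_of_subset hTS
  have hAfact : genPolyOn q m S a = rev T P * rev (S \ T) QA := by
    have hr := rev_mul T (S \ T) P QA hsuppP (hsuppQ QA hdegA) hdisj
    rw [hunion] at hr
    rw [← rev_rev_genPolyOn q hq S a, ← ha', hQA, hr]
  have hBfact : genPolyOn q m S b = rev T P * rev (S \ T) QB := by
    have hr := rev_mul T (S \ T) P QB hsuppP (hsuppQ QB hdegB) hdisj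
    rw [hunion] at hr
    rw [← rev_rev_genPolyOn q hq S b, ← hb', hQB, hr]
  have hUnit : IsUnit (rev T P) := hcop ⟨_, hAfact⟩ ⟨_, hBfact⟩
  have hrevTP_ne : rev T P ≠ 0 := hUnit.ne_zero
  have hC : rev T P = C (coeff 0 (rev T P)) :=
    eq_monomial_of_degreeOf_eq_zero (degreeOf_of_isUnit hUnit)
  set cc := coeff 0 (rev T P) with hcc
  have hcne : cc ≠ 0 := fun h => hrevTP_ne (by rw [hC, h, map_zero])
  have hP_eq : P = monomial (ind T) ((starRingEnd ℂ) cc) := by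
    rw [← rev_rev T P hsuppP, hC, rev_C T hcne]
  have hT0 : ind T = 0 := by
    by_contra hT0
    have hconstP : coeff 0 P = 0 := by
      rw [hP_eq, coeff_monomial, if_neg hT0]
    have hcc2 : coeff 0 (genPolyOn q m S a') = 0 := by
      have h4 : constantCoeff (genPolyOn q m S a')
          = constantCoeff P * constantCoeff QA := by rw [hQA, map_mul]
      simp only [constantCoeff_eq] at h4
      rw [h4, hconstP, zero_mul]
    rw [constantCoeff_genPolyOn] at hcc2
    exact zetaPow_ne_zero q _ hcc2
  rw [hP_eq, hT0, monomial_zero']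
  exact (isUnit_iff_ne_zero.mpr (star_ne_zero.mpr hcne)).map
    (C : ℂ →+* MvPolynomial (Fin m) ℂ)

end GapAux

namespace GapAux

open MvPolynomial

variable {m : ℕ}

noncomputable def extArr (S : Finset (Fin m)) (u : ↥S → Fin 2) : Fin m → Fin 2 :=
  fun i => if h : i ∈ S then ⟨1 - ((u ⟨i, h⟩ : ℕ)), by omega⟩ else 1

lemma expAll_extArr (S : Finset (Fin m)) (u : ↥S → Fin 2) :
    expAll (extArr S u) = ind (Finset.univ : Finset (Fin m)) - expOf S u := by
  ext k
  rw [expAll_apply, Finsupp.tsub_apply, ind_apply, if_pos (Finset.mem_univ k), expOf_apply]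
  by_cases h : k ∈ S
  · rw [dif_pos h]
    show ((extArr S u k : ℕ)) = 1 - ((u ⟨k, h⟩ : ℕ))
    rw [extArr, dif_pos h]
  · rw [dif_neg h]
    show ((extArr S u k : ℕ)) = 1 - 0
    rw [extArr, dif_neg h]
    rfl

end GapAux
/-- extracting the second factor pair. If F₀F̄₁(z⁻¹)+G₀Ḡ₁(z⁻¹)=0 on nonzero z,
    F₀ = A·C and G₀ = B·C with A, B generating functions of arrays on coordinates S₁,
    C on S₁ᶜ, and A, B coprime, then there is an array d on S₁ᶜ with generating function D
    such that F₁ = B̄*·D and G₁ = −Ā*·D, and D is a gcd of F₁ and G₁. -/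
theorem gap_second_factor (q m : ℕ) (hq : 0 < q)
    (f₀ f₁ g₀ g₁ : (Fin m → Fin 2) → ZMod q)
    (S₁ : Finset (Fin m))
    (a b : (↥S₁ → Fin 2) → ZMod q) (c : (↥(S₁ᶜ) → Fin 2) → ZMod q)
    (hcross : ∀ z : Fin m → ℂ, (∀ i, z i ≠ 0) →
      MvPolynomial.eval z (genPoly q m f₀)
          * MvPolynomial.eval (fun i => (z i)⁻¹)
              (MvPolynomial.map (starRingEnd ℂ) (genPoly q m f₁))
        + MvPolynomial.eval z (genPoly q m g₀)
          * MvPolynomial.eval (fun i => (z i)⁻¹)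
              (MvPolynomial.map (starRingEnd ℂ) (genPoly q m g₁)) = 0)
    (hF0 : genPoly q m f₀ = genPolyOn q m S₁ a * genPolyOn q m S₁ᶜ c)
    (hG0 : genPoly q m g₀ = genPolyOn q m S₁ b * genPolyOn q m S₁ᶜ c)
    (hcop : IsRelPrime (genPolyOn q m S₁ a) (genPolyOn q m S₁ b))
    (Astar Bstar : MvPolynomial (Fin m) ℂ)
    (hAstar : ∀ z : Fin m → ℂ, (∀ i, z i ≠ 0) →
      MvPolynomial.eval z Astar =
        (∏ k ∈ S₁, z k) *
          MvPolynomial.eval (fun i => (z i)⁻¹)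
            (MvPolynomial.map (starRingEnd ℂ) (genPolyOn q m S₁ a)))
    (hBstar : ∀ z : Fin m → ℂ, (∀ i, z i ≠ 0) →
      MvPolynomial.eval z Bstar =
        (∏ k ∈ S₁, z k) *
          MvPolynomial.eval (fun i => (z i)⁻¹)
            (MvPolynomial.map (starRingEnd ℂ) (genPolyOn q m S₁ b))) :
    ∃ d : (↥(S₁ᶜ) → Fin 2) → ZMod q,
      genPoly q m f₁ = Bstar * genPolyOn q m S₁ᶜ d ∧
      genPoly q m g₁ = -(Astar * genPolyOn q m S₁ᶜ d) ∧
      genPolyOn q m S₁ᶜ d ∣ genPoly q m f₁ ∧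
      genPolyOn q m S₁ᶜ d ∣ genPoly q m g₁ ∧
      ∀ E : MvPolynomial (Fin m) ℂ,
        E ∣ genPoly q m f₁ → E ∣ genPoly q m g₁ → E ∣ genPolyOn q m S₁ᶜ d := by
  classical
  have hdisj : Disjoint S₁ S₁ᶜ := disjoint_compl_right
  have huniv : S₁ ∪ S₁ᶜ = (Finset.univ : Finset (Fin m)) := Finset.union_compl S₁
  have hBne : genPolyOn q m S₁ b ≠ 0 := GapAux.genPolyOn_ne_zero q hq S₁ b
  have hCne : genPolyOn q m S₁ᶜ c ≠ 0 := GapAux.genPolyOn_ne_zero q hq S₁ᶜ c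
  have step1 : genPoly q m f₀ * GapAux.rev Finset.univ (genPoly q m f₁)
      + genPoly q m g₀ * GapAux.rev Finset.univ (genPoly q m g₁) = 0 := by
    apply GapAux.eq_of_eval_nonzero
    intro z hz
    rw [map_add, map_mul, map_mul,
      GapAux.eval_rev Finset.univ _ (GapAux.support_genPoly_le q f₁) z hz,
      GapAux.eval_rev Finset.univ _ (GapAux.support_genPoly_le q g₁) z hz, map_zero]
    have h := hcross z hz
    linear_combination (∏ k ∈ Finset.univ, z k) * h
  have step2 : genPolyOn q m S₁ a * GapAux.rev Finset.univ (genPoly q m f₁)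
      + genPolyOn q m S₁ b * GapAux.rev Finset.univ (genPoly q m g₁) = 0 := by
    have h2 : genPolyOn q m S₁ᶜ c * (genPolyOn q m S₁ a * GapAux.rev Finset.univ (genPoly q m f₁)
        + genPolyOn q m S₁ b * GapAux.rev Finset.univ (genPoly q m g₁)) = 0 := by
      rw [hF0, hG0] at step1
      linear_combination step1
    rcases mul_eq_zero.mp h2 with h | h
    · exact absurd h hCne
    · exact h
  have hBdvd : genPolyOn q m S₁ b ∣
      genPolyOn q m S₁ a * GapAux.rev Finset.univ (genPoly q m f₁) :=
    ⟨-(GapAux.rev Finset.univ (genPoly q m g₁)), by linear_combination step2⟩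
  obtain ⟨E, hE⟩ : genPolyOn q m S₁ b ∣ GapAux.rev Finset.univ (genPoly q m f₁) :=
    (hcop.symm).dvd_of_dvd_mul_left hBdvd
  have hG1s : GapAux.rev Finset.univ (genPoly q m g₁) = -(genPolyOn q m S₁ a * E) := by
    apply mul_left_cancel₀ hBne
    rw [hE] at step2
    linear_combination step2
  have hF1s_ne : GapAux.rev Finset.univ (genPoly q m f₁) ≠ 0 := by
    intro h
    have h0 : (0 : Fin m →₀ ℕ) ≤ GapAux.ind (Finset.univ : Finset (Fin m)) := zero_le
    have hcz := GapAux.coeff_rev Finset.univ (genPoly q m f₁)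
      (GapAux.support_genPoly_le q f₁) h0
    rw [h, MvPolynomial.coeff_zero, tsub_zero] at hcz
    have h1 : GapAux.ind (Finset.univ : Finset (Fin m))
        = GapAux.expAll (fun _ => (1 : Fin 2)) := by
      ext k
      rw [GapAux.expAll_apply, GapAux.ind_apply, if_pos (Finset.mem_univ k)]
      rfl
    rw [h1, GapAux.coeff_genPoly] at hcz
    exact GapAux.zetaPow_ne_zero q _ (star_eq_zero.mp hcz.symm)
  have hEne : E ≠ 0 := fun h => hF1s_ne (by rw [hE, h, mul_zero])
  have hsuppE : ∀ d ∈ E.support, d ≤ GapAux.ind S₁ᶜ := by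
    intro d hd k
    have h1 := GapAux.apply_le_degreeOf hd k
    have h2 : MvPolynomial.degreeOf k (genPolyOn q m S₁ b) + MvPolynomial.degreeOf k E
        = MvPolynomial.degreeOf k (GapAux.rev Finset.univ (genPoly q m f₁)) := by
      rw [← GapAux.degreeOf_mul_eq k hBne hEne, ← hE]
    have h3 : MvPolynomial.degreeOf k (GapAux.rev Finset.univ (genPoly q m f₁))
        ≤ GapAux.ind (Finset.univ : Finset (Fin m)) k :=
      GapAux.degreeOf_le_ind (fun e he => GapAux.support_rev_le _ _ he) k
    rw [GapAux.ind_apply, if_pos (Finset.mem_univ k)] at h3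
    rw [GapAux.degreeOf_genPolyOn] at h2
    rw [GapAux.ind_apply]
    by_cases hk : k ∈ S₁ᶜ
    · rw [if_pos hk]
      have hk1 : k ∉ S₁ := Finset.mem_compl.mp hk
      rw [GapAux.ind_apply, if_neg hk1] at h2
      omega
    · rw [if_neg hk]
      have hk1 : k ∈ S₁ := by
        by_contra hc
        exact hk (Finset.mem_compl.mpr hc)
      rw [GapAux.ind_apply, if_pos hk1] at h2
      omega
  set e₀ : (↥(S₁ᶜ) → Fin 2) → ZMod q :=
    fun u => -(f₁ (GapAux.extArr S₁ᶜ u)) - b (fun _ => 0) with he₀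
  have hEcoeff : ∀ u : ↥(S₁ᶜ) → Fin 2,
      MvPolynomial.coeff (GapAux.expOf S₁ᶜ u) E = zetaPow q (e₀ u) := by
    intro u
    have hle : GapAux.expOf S₁ᶜ u ≤ GapAux.ind (Finset.univ : Finset (Fin m)) := by
      intro k
      refine le_trans (GapAux.expOf_le S₁ᶜ u k) ?_
      rw [GapAux.ind_apply, GapAux.ind_apply, if_pos (Finset.mem_univ k)]
      split <;> omega
    have h1 := GapAux.coeff_rev Finset.univ (genPoly q m f₁)
      (GapAux.support_genPoly_le q f₁) hle
    rw [← GapAux.expAll_extArr S₁ᶜ u, GapAux.coeff_genPoly, GapAux.conj_zetaPow q hq] at h1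
    have h2 := GapAux.coeff_mul_corner hdisj (GapAux.support_genPolyOn_le q S₁ b)
      (Q := E) (GapAux.expOf_le S₁ᶜ u)
    rw [← hE, GapAux.constantCoeff_genPolyOn] at h2
    have h3 : zetaPow q (b fun _ => 0) * MvPolynomial.coeff (GapAux.expOf S₁ᶜ u) E
        = zetaPow q (-(f₁ (GapAux.extArr S₁ᶜ u))) := by rw [← h2, h1]
    have hbz := GapAux.zetaPow_ne_zero q (b fun _ => 0)
    have h4 : zetaPow q (e₀ u) * zetaPow q (b fun _ => 0)
        = zetaPow q (-(f₁ (GapAux.extArr S₁ᶜ u))) := by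
      rw [← GapAux.zetaPow_add q hq]
      congr 1
      show -(f₁ (GapAux.extArr S₁ᶜ u)) - b (fun _ => 0) + b (fun _ => 0) = _
      ring
    apply mul_left_cancel₀ hbz
    rw [h3, ← h4]
    ring
  have hE_eq : E = genPolyOn q m S₁ᶜ e₀ := by
    apply MvPolynomial.ext
    intro d
    by_cases hd : d ≤ GapAux.ind S₁ᶜ
    · obtain ⟨u, rfl⟩ : ∃ u, d = GapAux.expOf S₁ᶜ u :=
        ⟨GapAux.arrOf S₁ᶜ d hd, (GapAux.expOf_arrOf S₁ᶜ d hd).symm⟩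
      rw [hEcoeff u, GapAux.coeff_genPolyOn]
    · have h1 : MvPolynomial.coeff d E = 0 := by
        rw [← MvPolynomial.notMem_support_iff]
        intro hmem
        exact hd (hsuppE d hmem)
      have h2 : MvPolynomial.coeff d (genPolyOn q m S₁ᶜ e₀) = 0 := by
        rw [← MvPolynomial.notMem_support_iff]
        intro hmem
        exact hd (GapAux.support_genPolyOn_le q S₁ᶜ e₀ d hmem)
      rw [h1, h2]
  have hrevE : GapAux.rev S₁ᶜ E
      = genPolyOn q m S₁ᶜ (fun u => -(e₀ (GapAux.flipArr S₁ᶜ u))) := by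
    rw [hE_eq, GapAux.rev_genPolyOn q hq]
  have hBstar_eq : Bstar = GapAux.rev S₁ (genPolyOn q m S₁ b) := by
    apply GapAux.eq_of_eval_nonzero
    intro z hz
    rw [hBstar z hz, GapAux.eval_rev S₁ _ (GapAux.support_genPolyOn_le q S₁ b) z hz]
  have hAstar_eq : Astar = GapAux.rev S₁ (genPolyOn q m S₁ a) := by
    apply GapAux.eq_of_eval_nonzero
    intro z hz
    rw [hAstar z hz, GapAux.eval_rev S₁ _ (GapAux.support_genPolyOn_le q S₁ a) z hz]
  have hrevmulF : GapAux.rev Finset.univ (genPolyOn q m S₁ b * E)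
      = Bstar * genPolyOn q m S₁ᶜ (fun u => -(e₀ (GapAux.flipArr S₁ᶜ u))) := by
    have hr := GapAux.rev_mul S₁ S₁ᶜ (genPolyOn q m S₁ b) E
      (GapAux.support_genPolyOn_le q S₁ b) hsuppE hdisj
    rw [huniv] at hr
    rw [hr, hrevE, hBstar_eq]
  have hrevmulG : GapAux.rev Finset.univ (genPolyOn q m S₁ a * E)
      = Astar * genPolyOn q m S₁ᶜ (fun u => -(e₀ (GapAux.flipArr S₁ᶜ u))) := by
    have hr := GapAux.rev_mul S₁ S₁ᶜ (genPolyOn q m S₁ a) E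
      (GapAux.support_genPolyOn_le q S₁ a) hsuppE hdisj
    rw [huniv] at hr
    rw [hr, hrevE, hAstar_eq]
  have hF1 : genPoly q m f₁
      = Bstar * genPolyOn q m S₁ᶜ (fun u => -(e₀ (GapAux.flipArr S₁ᶜ u))) := by
    rw [← GapAux.rev_rev Finset.univ (genPoly q m f₁) (GapAux.support_genPoly_le q f₁), hE,
      hrevmulF]
  have hG1 : genPoly q m g₁
      = -(Astar * genPolyOn q m S₁ᶜ (fun u => -(e₀ (GapAux.flipArr S₁ᶜ u)))) := by
    rw [← GapAux.rev_rev Finset.univ (genPoly q m g₁) (GapAux.support_genPoly_le q g₁), hG1s,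
      GapAux.rev_neg, hrevmulG]
  refine ⟨(fun u => -(e₀ (GapAux.flipArr S₁ᶜ u))), hF1, hG1,
    ⟨Bstar, by rw [hF1]; ring⟩, ⟨-Astar, by rw [hG1]; ring⟩, ?_⟩
  intro E' hdf hdg
  rw [hF1] at hdf
  rw [hG1] at hdg
  have hdg' : E' ∣ Astar * genPolyOn q m S₁ᶜ (fun u => -(e₀ (GapAux.flipArr S₁ᶜ u))) :=
    (dvd_neg).mp hdg
  exact GapAux.dvd_of_dvd_mul_relprime hdg' hdf
    (by rw [hAstar_eq, hBstar_eq]; exact GapAux.isRelPrime_rev q hq S₁ a b hcop)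
end
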